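/- arXiv:2212.03347 — 4 statements merged into one kernel-verified Lean document; each statement's English description precedes it below -/
import Mathlib

section
/- Let G be an (s,k)-edge-connected graph with deg(s) = 3. Then no set A ⊆ V(G)\{s} with |δ(A)| ≤ k+1 and V(G)\(A∪{s}) ≠ ∅ contains all three neighbours of s. In other words, any vertex set containing all the neighbours of s is not k-dangerous. -/
/-- A finite loopless multigraph. -/
structure Multigraph where
  V : Type
  E : Type
  [finV : Fintype V]
  [finE : Fintype E]
  [decV : DecidableEq V]
  [decE : DecidableEq E]
  ends : E → Sym2 V
  loopless : ∀ e, ¬ (ends e).IsDiag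

attribute [instance] Multigraph.finV Multigraph.finE Multigraph.decV Multigraph.decE

namespace Multigraph

variable (G : Multigraph)

/-- Walks in a multigraph, recorded as lists of edges. -/
inductive IsWalk (G : Multigraph) : G.V → G.V → List G.E → Prop
  | nil (v : G.V) : IsWalk G v v []
  | cons {u v w : G.V} {e : G.E} {p : List G.E} :
      G.ends e = s(u, v) → IsWalk G v w p → IsWalk G u w (e :: p)

/-- There exist `k` pairwise edge-disjoint paths from `u` to `v`. -/
def EdgeDisjointPaths (u v : G.V) (k : ℕ) : Prop :=
  ∃ P : Fin k → List G.E, (∀ i, G.IsWalk u v (P i)) ∧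
    ∀ i j, i ≠ j → ∀ e, e ∈ P i → e ∉ P j

/-- There exist `k` pairwise edge-disjoint paths from `u` to `v` using only
edges with both ends in `B`. -/
def EdgeDisjointPathsWithin (B : Set G.V) (u v : G.V) (k : ℕ) : Prop :=
  ∃ P : Fin k → List G.E,
    (∀ i, G.IsWalk u v (P i) ∧ ∀ e ∈ P i, ∀ w ∈ G.ends e, w ∈ B) ∧
    ∀ i j, i ≠ j → ∀ e, e ∈ P i → e ∉ P j

/-- `G` is `(s,k)`-edge-connected: it has at least three vertices and any two
vertices different from `s` are joined by `k` pairwise edge-disjoint paths. -/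
def SKConnected (s : G.V) (k : ℕ) : Prop :=
  3 ≤ Fintype.card G.V ∧
    ∀ u v : G.V, u ≠ s → v ≠ s → G.EdgeDisjointPaths u v k

/-- The edge cut `δ(A)`: edges with exactly one end in `A`. -/
def cutSet (A : Set G.V) : Set G.E :=
  {e | ∃ u v, G.ends e = s(u, v) ∧ u ∈ A ∧ v ∉ A}

/-- `δ(A:B)`: edges with one end in `A` and the other in `B`. -/
def between (A B : Set G.V) : Set G.E :=
  {e | ∃ u v, G.ends e = s(u, v) ∧ u ∈ A ∧ v ∈ B}

/-- The set of edges incident with `s`. -/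
def incEdges (s : G.V) : Set G.E := {e | s ∈ G.ends e}

/-- The degree of `s`: the number of edges incident with `s` (counted with
multiplicity). -/
noncomputable def deg (s : G.V) : ℕ := (G.incEdges s).ncard

/-- The set of neighbours of `s`. -/
def neighborSet (s : G.V) : Set G.V := {v | ∃ e, G.ends e = s(s, v)}

/-- `A ⊆ V(G)\{s}` is `k`-dangerous if it is nonempty, misses some non-`s`
vertex, and `|δ(A)| ≤ k+1`. -/
def Dangerous (s : G.V) (k : ℕ) (A : Set G.V) : Prop :=
  A.Nonempty ∧ s ∉ A ∧ (A ∪ {s})ᶜ.Nonempty ∧ (G.cutSet A).ncard ≤ k + 1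

/-- The other end of an edge incident with `s` (junk value `s` otherwise). -/
def otherEnd (s : G.V) (e : G.E) : G.V :=
  if h : s ∈ G.ends e then Sym2.Mem.other' h else s

/-- The lift of `G` at `s` obtained from the pair of edges `e, f`: both are
deleted and an edge joining their other ends is added (no edge is added if the
other ends coincide, i.e. `e` and `f` are parallel). -/
def lift (s : G.V) (e f : G.E) : Multigraph where
  V := G.V
  E := {x : G.E // x ≠ e ∧ x ≠ f} ⊕ PLift (G.otherEnd s e ≠ G.otherEnd s f)
  finV := inferInstance
  finE := by
    haveI : Fintype (PLift (G.otherEnd s e ≠ G.otherEnd s f)) := by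
      by_cases h : G.otherEnd s e ≠ G.otherEnd s f
      · exact Fintype.ofSubsingleton ⟨h⟩
      · haveI : IsEmpty (PLift (G.otherEnd s e ≠ G.otherEnd s f)) := ⟨fun x => h x.down⟩
        exact Fintype.ofIsEmpty
    infer_instance
  decV := inferInstance
  decE := by
    haveI : DecidableEq (PLift (G.otherEnd s e ≠ G.otherEnd s f)) :=
      fun a b => isTrue (Subsingleton.elim a b)
    infer_instance
  ends := fun x => match x with
    | Sum.inl y => G.ends y.1
    | Sum.inr _ => s(G.otherEnd s e, G.otherEnd s f)
  loopless := by
    rintro (y | h)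
    · exact G.loopless y.1
    · simpa using h.down

/-- The pair of edges `e, f` at `s` is `k`-liftable if the lift of `G` at
`e, f` is still `(s,k)`-edge-connected. -/
def IsLiftable (s : G.V) (k : ℕ) (e f : G.E) : Prop :=
  (G.lift s e f).SKConnected s k ∧ (G.lift s f e).SKConnected s k

/-- The `k`-lifting graph `L(G,s,k)`: vertices are the edges incident with
`s`, adjacent iff they form a `k`-liftable pair. -/
def liftingGraph (s : G.V) (k : ℕ) : SimpleGraph ↥(G.incEdges s) where
  Adj e f := e ≠ f ∧ G.IsLiftable s k e.1 f.1 ∧ G.IsLiftable s k f.1 e.1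
  symm := ⟨fun a b h => ⟨h.1.symm, h.2.2, h.2.1⟩⟩
  loopless := ⟨fun a h => h.1 rfl⟩

/-- A dangerous set corresponding to an independent set `I` of the lifting
graph: it contains the non-`s` ends of all edges of `I`. -/
def CorrDangerous (s : G.V) (k : ℕ) (I : Set ↥(G.incEdges s)) (A : Set G.V) : Prop :=
  G.Dangerous s k A ∧ ∀ e : ↥(G.incEdges s), e ∈ I → G.otherEnd s e.1 ∈ A

/-- A minimal dangerous set corresponding to `I`. -/
def MinCorrDangerous (s : G.V) (k : ℕ) (I : Set ↥(G.incEdges s)) (A : Set G.V) : Prop :=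
  G.CorrDangerous s k I A ∧ ∀ B, G.CorrDangerous s k I B → B ⊆ A → B = A

/-- Reachability in a multigraph. -/
def Reachable (u v : G.V) : Prop := ∃ p, G.IsWalk u v p

/-- Reachability avoiding a set `F` of edges. -/
def ReachableOutside (F : Set G.E) (u v : G.V) : Prop :=
  ∃ p, G.IsWalk u v p ∧ ∀ e ∈ p, e ∉ F

/-- Deleting the edge set `F` disconnects `G`. -/
def Disconnects (F : Set G.E) : Prop :=
  ∃ u v, G.Reachable u v ∧ ¬ G.ReachableOutside F u v

/-- A cut-edge: its deletion disconnects the graph. -/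
def IsCutEdge (e : G.E) : Prop := G.Disconnects {e}

/-- A minimal edge-cut: an inclusion-minimal set of edges whose deletion
disconnects the graph. -/
def IsMinimalCut (F : Set G.E) : Prop :=
  G.Disconnects F ∧ ∀ F' ⊂ F, ¬ G.Disconnects F'

/-- `G` has an `(s,r)`-path structure with blobs `B 0, …, B (n-1)`. -/
def PathStructure (s : G.V) (r : ℕ) {n : ℕ} (B : Fin n → Set G.V) : Prop :=
  3 ≤ n ∧
  (∀ i j, i ≠ j → Disjoint (B i) (B j)) ∧
  (⋃ i, B i) = {s}ᶜ ∧
  ∀ i : Fin n, ∀ h1 : 0 < i.1, ∀ h2 : i.1 < n - 1,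
    (G.cutSet (B i)).ncard = 2 * r + 1 ∧
    (G.between (B i) {s}).ncard = 1 ∧
    (G.between (B i) (B ⟨i.1 - 1, by omega⟩)).ncard = r ∧
    (G.between (B i) (B ⟨i.1 + 1, by omega⟩)).ncard = r

end Multigraph

section SimpleGraphDefs

variable {α : Type*}

/-- `I` is an independent set of a simple graph. -/
def IndepSet (H : SimpleGraph α) (I : Set α) : Prop :=
  ∀ a ∈ I, ∀ b ∈ I, ¬ H.Adj a b

/-- `I` is a maximal independent set. -/
def MaxIndepSet (H : SimpleGraph α) (I : Set α) : Prop :=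
  IndepSet H I ∧ ∀ J, IndepSet H J → I ⊆ J → J = I

/-- The independence graph of `H`: vertices are the maximal independent sets
of `H`, adjacent iff they intersect. -/
def independenceGraph (H : SimpleGraph α) :
    SimpleGraph {I : Set α // MaxIndepSet H I} where
  Adj I J := I ≠ J ∧ (I.1 ∩ J.1).Nonempty
  symm := ⟨fun I J h => ⟨h.1.symm, by rw [Set.inter_comm]; exact h.2⟩⟩
  loopless := ⟨fun I h => h.1 rfl⟩

/-- `H` is complete multipartite: non-adjacency is transitive. -/
def IsCompleteMultipartite (H : SimpleGraph α) : Prop :=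
  Transitive fun a b => ¬ H.Adj a b

/-- `H` is a star: there is a centre adjacent to exactly the other vertices,
which are pairwise non-adjacent. -/
def IsStarGraph (H : SimpleGraph α) : Prop :=
  ∃ c : α, ∀ a b, H.Adj a b ↔ (a ≠ b ∧ (a = c ∨ b = c))

end SimpleGraphDefs



private lemma walk_crossing (G : Multigraph) (s : G.V) (A : Set G.V)
    (hN : G.neighborSet s ⊆ A) (hs : s ∉ A)
    {u v : G.V} {p : List G.E} (hw : G.IsWalk u v p) :
    u ∈ A ∪ {s} → v ∉ A ∪ {s} →
    ∃ e ∈ p, e ∈ G.cutSet A ∧ s ∉ G.ends e := by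
  induction hw with
  | nil w => exact fun hu hv => absurd hu hv
  | @cons a b c e q he hw ih =>
    intro hu hv
    by_cases hb : b ∈ A ∪ {s}
    · obtain ⟨e', he', hc, hns⟩ := ih hb hv
      exact ⟨e', List.mem_cons_of_mem _ he', hc, hns⟩
    · rcases hu with hu | hu
      · refine ⟨e, List.mem_cons_self, ⟨a, b, he, hu, fun h => hb (Or.inl h)⟩, ?_⟩
        rw [he, Sym2.mem_iff]
        rintro (rfl | rfl)
        · exact hs hu
        · exact hb (Or.inr rfl)
      · simp only [Set.mem_singleton_iff] at hu
        subst hu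
        exact absurd (Or.inl (hN ⟨e, he⟩)) hb

/-- if `deg s = 3`, no set containing all the neighbours of `s`
is `k`-dangerous. -/
theorem no_dangerous_set_with_all_three_neighbours (G : Multigraph) (s : G.V) (k : ℕ)
    (hk : 1 ≤ k) (hcon : G.SKConnected s k) (hdeg : G.deg s = 3)
    (A : Set G.V) (hA : G.neighborSet s ⊆ A) :
    ¬ G.Dangerous s k A := by
  rintro ⟨⟨u, huA⟩, hsA, ⟨v, hv⟩, hcut⟩
  have hus : u ≠ s := fun h => hsA (h ▸ huA)
  have hvA : v ∉ A ∪ {s} := hv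
  have hvs : v ≠ s := fun h => hvA (Or.inr h)
  obtain ⟨P, hP, hdisj⟩ := hcon.2 u v hus hvs
  -- each path has a cut edge not incident with s
  have hchoose : ∀ i : Fin k, ∃ e, e ∈ P i ∧ e ∈ G.cutSet A ∧ s ∉ G.ends e := by
    intro i
    obtain ⟨e, he, hc, hns⟩ := walk_crossing G s A hA hsA (hP i) (Or.inl huA) hvA
    exact ⟨e, he, hc, hns⟩
  choose f hfP hfc hfn using hchoose
  have hfinj : Function.Injective f := by
    intro i j hij
    by_contra hne
    exact hdisj i j hne (f i) (hfP i) (hij ▸ hfP j)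
  -- edges at s lie in the cut
  have hinc : G.incEdges s ⊆ G.cutSet A := by
    intro e (he : s ∈ G.ends e)
    have hspec := Sym2.other_spec' he
    have hw : Sym2.Mem.other' he ∈ G.neighborSet s := ⟨e, hspec.symm⟩
    refine ⟨Sym2.Mem.other' he, s, ?_, hA hw, hsA⟩
    rw [Sym2.eq_swap]
    exact hspec.symm
  have hrange : Set.range f ⊆ G.cutSet A \ G.incEdges s := by
    rintro _ ⟨i, rfl⟩
    exact ⟨hfc i, hfn i⟩
  have hfin1 : (G.incEdges s).Finite := Set.toFinite _
  have hfin2 : (Set.range f).Finite := Set.toFinite _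
  have hdisj2 : Disjoint (G.incEdges s) (Set.range f) := by
    rw [Set.disjoint_right]
    rintro _ ⟨i, rfl⟩
    exact hfn i
  have hsub : G.incEdges s ∪ Set.range f ⊆ G.cutSet A :=
    Set.union_subset hinc (hrange.trans Set.diff_subset)
  have h1 : (G.incEdges s ∪ Set.range f).ncard ≤ (G.cutSet A).ncard :=
    Set.ncard_le_ncard hsub (Set.toFinite _)
  have h2 : (G.incEdges s ∪ Set.range f).ncard
      = (G.incEdges s).ncard + (Set.range f).ncard :=
    Set.ncard_union_eq hdisj2 hfin1 hfin2
  have h3 : (Set.range f).ncard = k := by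
    rw [← Nat.card_coe_set_eq, Nat.card_range_of_injective hfinj,
      Nat.card_eq_fintype_card, Fintype.card_fin]
  have : (3 : ℕ) + k ≤ k + 1 := by
    rw [← hdeg]
    calc G.deg s + k = (G.incEdges s ∪ Set.range f).ncard := by
          rw [h2, h3]; rfl
      _ ≤ (G.cutSet A).ncard := h1
      _ ≤ k + 1 := hcut
  omega
end

section
/- Let G be an (s,k)-edge-connected graph with deg(s) ≥ 2. If su and sv are edges of G that are not k-liftable, then there exists a k-dangerous set A in G containing both u and v. -/
namespace Multigraph

variable {M : Multigraph}

/-! ### Walk utilities -/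

lemma IsWalk.append {a b c : M.V} {p q : List M.E} (h1 : M.IsWalk a b p)
    (h2 : M.IsWalk b c q) : M.IsWalk a c (p ++ q) := by
  induction h1 with
  | nil v => simpa using h2
  | cons he hw ih => exact IsWalk.cons he (ih h2)

lemma ends_otherEnd {s : M.V} {e : M.E} (he : s ∈ M.ends e) :
    M.ends e = s(s, M.otherEnd s e) := by
  rw [otherEnd, dif_pos he]
  exact (Sym2.other_spec' he).symm

lemma exists_mem_cutSet {A : Set M.V} {a b : M.V} {p : List M.E}
    (h : M.IsWalk a b p) (ha : a ∈ A) (hb : b ∉ A) :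
    ∃ e ∈ p, e ∈ M.cutSet A := by
  induction p generalizing a with
  | nil => cases h; exact absurd ha hb
  | cons e p ih =>
    cases h with
    | @cons _ v _ _ _ he hw =>
      by_cases hv : v ∈ A
      · obtain ⟨e', he', hc⟩ := ih hw hv
        exact ⟨e', List.mem_cons_of_mem _ he', hc⟩
      · exact ⟨e, List.mem_cons_self, ⟨a, v, he, ha, hv⟩⟩

lemma cutSet_compl (A : Set M.V) : M.cutSet Aᶜ = M.cutSet A := by
  ext e
  constructor
  · rintro ⟨u, v, he, hu, hv⟩
    exact ⟨v, u, by rwa [Sym2.eq_swap], by simpa using hv, by simpa using hu⟩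
  · rintro ⟨u, v, he, hu, hv⟩
    exact ⟨v, u, by rwa [Sym2.eq_swap], by simpa using hv, by simpa using hu⟩

lemma le_ncard_cutSet {A : Set M.V} {a b : M.V} {k : ℕ}
    (ha : a ∈ A) (hb : b ∉ A) (h : M.EdgeDisjointPaths a b k) :
    k ≤ (M.cutSet A).ncard := by
  classical
  obtain ⟨P, hP, hdisj⟩ := h
  have hc : ∀ i : Fin k, ∃ e, e ∈ P i ∧ e ∈ M.cutSet A := by
    intro i
    obtain ⟨e, he, hc⟩ := exists_mem_cutSet (hP i) ha hb
    exact ⟨e, he, hc⟩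
  choose c hc1 hc2 using hc
  have hinj : Function.Injective fun i : Fin k => (⟨c i, hc2 i⟩ : M.cutSet A) := by
    intro i j hij
    by_contra hne
    have : c i = c j := congrArg Subtype.val hij
    exact hdisj i j hne (c i) (hc1 i) (this ▸ hc1 j)
  have := Fintype.card_le_of_injective _ hinj
  simpa [Set.ncard_eq_toFinset_card', Set.toFinset_card] using this

end Multigraph
namespace Multigraph

variable {M : Multigraph}

/-! ### Chains: walks over an abstract step relation, carrying orientations -/

inductive Chain (S : M.E → M.V → M.V → Prop) : M.V → M.V → List (M.E × M.V × M.V) → Prop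
  | nil (a : M.V) : Chain S a a []
  | cons {e : M.E} {a b c : M.V} {L : List (M.E × M.V × M.V)} :
      S e a b → Chain S b c L → Chain S a c ((e, a, b) :: L)

lemma Chain.append {S : M.E → M.V → M.V → Prop} {a b c : M.V}
    {L1 L2 : List (M.E × M.V × M.V)} (h1 : Chain S a b L1) (h2 : Chain S b c L2) :
    Chain S a c (L1 ++ L2) := by
  induction h1 with
  | nil v => simpa using h2
  | cons hs hc ih => exact Chain.cons hs (ih h2)

lemma chain_cons_inv {S : M.E → M.V → M.V → Prop} {a c : M.V} {t : M.E × M.V × M.V}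
    {L : List (M.E × M.V × M.V)} (h : Chain S a c (t :: L)) :
    t.2.1 = a ∧ S t.1 a t.2.2 ∧ Chain S t.2.2 c L := by
  cases h with
  | cons hs hc => exact ⟨rfl, hs, hc⟩

lemma Chain.split {S : M.E → M.V → M.V → Prop} {a c : M.V}
    {L1 L2 : List (M.E × M.V × M.V)} (h : Chain S a c (L1 ++ L2)) :
    ∃ b, Chain S a b L1 ∧ Chain S b c L2 := by
  induction L1 generalizing a with
  | nil => exact ⟨a, Chain.nil a, h⟩
  | cons t L1 ih =>
    obtain ⟨e, p, q⟩ := t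
    obtain ⟨hp, hs, hc⟩ := chain_cons_inv h
    obtain ⟨b, hb1, hb2⟩ := ih hc
    subst hp
    exact ⟨b, Chain.cons hs hb1, hb2⟩

lemma Chain.reverse {S : M.E → M.V → M.V → Prop} {a b : M.V}
    {L : List (M.E × M.V × M.V)} (h : Chain S a b L) :
    Chain (fun e x y => S e y x) b a (L.reverse.map fun t => (t.1, t.2.2, t.2.1)) := by
  induction h with
  | nil v => exact Chain.nil v
  | @cons e a b c L hs hc ih =>
    rw [List.reverse_cons, List.map_append]
    exact ih.append (Chain.cons hs (Chain.nil _))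

/-- Coherence of a step relation: an edge determines its traversal up to swap. -/
def Coherent (S : M.E → M.V → M.V → Prop) : Prop :=
  ∀ e a b a' b', S e a b → S e a' b' → (a = a' ∧ b = b') ∨ (a = b' ∧ b = a')

lemma not_nodup_decomp {L : List (M.E × M.V × M.V)} (h : ¬ (L.map Prod.fst).Nodup) :
    ∃ l1 t1 l2 t2 l3, L = l1 ++ t1 :: (l2 ++ t2 :: l3) ∧ t1.1 = t2.1 := by
  induction L with
  | nil => simp at h
  | cons t L ih =>
    rw [List.map_cons, List.nodup_cons] at h
    by_cases hm : t.1 ∈ L.map Prod.fst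
    · obtain ⟨t2, ht2, he⟩ := List.mem_map.1 hm
      obtain ⟨l2, l3, rfl⟩ := List.append_of_mem ht2
      exact ⟨[], t, l2, t2, l3, rfl, he.symm⟩
    · have : ¬ (L.map Prod.fst).Nodup := fun hn => h ⟨hm, hn⟩
      obtain ⟨l1, t1, l2, t2, l3, rfl, he⟩ := ih this
      exact ⟨t :: l1, t1, l2, t2, l3, rfl, he⟩

lemma Chain.dedup {S : M.E → M.V → M.V → Prop} (hS : Coherent S) {a b : M.V}
    {L : List (M.E × M.V × M.V)} (h : Chain S a b L) :
    ∃ L', Chain S a b L' ∧ (L'.map Prod.fst).Nodup := by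
  classical
  obtain ⟨n, hn⟩ : ∃ n, L.length ≤ n := ⟨L.length, le_refl _⟩
  induction n generalizing L with
  | zero =>
    interval_cases hL : L.length
    · rw [List.length_eq_zero_iff] at hL; subst hL; exact ⟨[], h, List.nodup_nil⟩
  | succ n ih =>
    by_cases hnd : (L.map Prod.fst).Nodup
    · exact ⟨L, h, hnd⟩
    · obtain ⟨l1, t1, l2, t2, l3, rfl, hee⟩ := not_nodup_decomp hnd
      obtain ⟨e1, p1, q1⟩ := t1
      obtain ⟨e2, p2, q2⟩ := t2
      dsimp only at hee
      subst hee
      obtain ⟨v1, hc1, hc2⟩ := h.split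
      obtain ⟨hp1, hs1, hc3⟩ := chain_cons_inv hc2
      dsimp only at hp1 hs1 hc3
      subst hp1
      obtain ⟨v2, hc4, hc5⟩ := hc3.split
      obtain ⟨hp2, hs2, hc6⟩ := chain_cons_inv hc5
      dsimp only at hp2 hs2 hc6
      subst hp2
      rcases hS _ _ _ _ _ hs1 hs2 with ⟨h1, h2⟩ | ⟨h1, h2⟩
      · have hc6' : Chain S q1 b l3 := by rw [h2]; exact hc6
        have hnew : Chain S a b (l1 ++ (e1, p1, q1) :: l3) :=
          hc1.append (Chain.cons hs1 hc6')
        have hlen : (l1 ++ (e1, p1, q1) :: l3).length ≤ n := by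
          simp only [List.length_append, List.length_cons] at hn ⊢; omega
        exact ih hnew hlen
      · have hc6' : Chain S p1 b l3 := by rw [h1]; exact hc6
        have hnew : Chain S a b (l1 ++ l3) := hc1.append hc6'
        have hlen : (l1 ++ l3).length ≤ n := by
          simp only [List.length_append, List.length_cons] at hn ⊢; omega
        exact ih hnew hlen

end Multigraph
namespace Multigraph

variable {M : Multigraph}

/-! ### Flows -/

/-- Weight of an oriented edge at a vertex. -/
def Wt [DecidableEq α] : Option (α × α) → α → ℤ
  | none, _ => 0
  | some (a, b), z => (if a = z then 1 else 0) - (if b = z then 1 else 0)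

/-- Excess of a flow-candidate at a vertex. -/
def phi (M : Multigraph) (f : M.E → Option (M.V × M.V)) (z : M.V) : ℤ :=
  ∑ e : M.E, Wt (f e) z

/-- Orientations are consistent with ends. -/
def Valid (M : Multigraph) (f : M.E → Option (M.V × M.V)) : Prop :=
  ∀ ⦃e a b⦄, f e = some (a, b) → M.ends e = s(a, b)

def IsFlow (M : Multigraph) (x y : M.V) (t : ℕ) (f : M.E → Option (M.V × M.V)) : Prop :=
  M.Valid f ∧ (∀ z, z ≠ x → z ≠ y → M.phi f z = 0) ∧ M.phi f x = t ∧ M.phi f y = -(t : ℤ)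

/-- Residual step: unused edge in either direction, or used edge backwards. -/
def ResStep (M : Multigraph) (f : M.E → Option (M.V × M.V)) (e : M.E) (a b : M.V) : Prop :=
  (f e = none ∧ M.ends e = s(a, b)) ∨ f e = some (b, a)

/-- Forward step along a used edge. -/
def FwdStep (M : Multigraph) (f : M.E → Option (M.V × M.V)) (e : M.E) (a b : M.V) : Prop :=
  f e = some (a, b)

lemma resStep_coherent (f : M.E → Option (M.V × M.V)) : Coherent (M.ResStep f) := by
  rintro e a b a' b' (⟨h1, h2⟩ | h1) (⟨h3, h4⟩ | h3)
  · rw [h2, Sym2.eq_iff] at h4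
    tauto
  · rw [h1] at h3; cases h3
  · rw [h1] at h3; cases h3
  · rw [h1] at h3
    injection h3 with h
    injection h with h h'
    exact Or.inl ⟨h', h⟩

lemma fwdStep_coherent (f : M.E → Option (M.V × M.V)) : Coherent (M.FwdStep f) := by
  rintro e a b a' b' h1 h3
  unfold FwdStep at h1 h3
  rw [h1] at h3
  injection h3 with h
  injection h with h h'
  exact Or.inl ⟨h, h'⟩

def toggle (f : M.E → Option (M.V × M.V)) (e : M.E) (a b : M.V) :
    M.E → Option (M.V × M.V) :=
  Function.update f e (if f e = none then some (a, b) else none)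

def augment (f : M.E → Option (M.V × M.V)) :
    List (M.E × M.V × M.V) → (M.E → Option (M.V × M.V))
  | [] => f
  | t :: L => augment (toggle f t.1 t.2.1 t.2.2) L

lemma toggle_apply_ne {f : M.E → Option (M.V × M.V)} {e e' : M.E} {a b : M.V}
    (h : e' ≠ e) : toggle f e a b e' = f e' := Function.update_of_ne h _ f

lemma toggle_apply_self (f : M.E → Option (M.V × M.V)) (e : M.E) (a b : M.V) :
    toggle f e a b e = if f e = none then some (a, b) else none := by
  simp [toggle]

lemma valid_toggle {f : M.E → Option (M.V × M.V)} {e : M.E} {a b : M.V}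
    (hs : M.ResStep f e a b) (hv : M.Valid f) : M.Valid (toggle f e a b) := by
  intro e' a' b' h
  by_cases he : e' = e
  · subst he
    rw [toggle_apply_self] at h
    rcases hs with ⟨h1, h2⟩ | h1
    · rw [if_pos h1] at h
      injection h with h
      injection h with h h'
      rw [← h, ← h']; exact h2
    · rw [if_neg (by simp [h1])] at h; cases h
  · exact hv (by rwa [toggle_apply_ne he] at h)

lemma phi_toggle {f : M.E → Option (M.V × M.V)} {e : M.E} {a b : M.V}
    (hs : M.ResStep f e a b) (z : M.V) :
    M.phi (toggle f e a b) z = M.phi f z + (if a = z then 1 else 0) - (if b = z then 1 else 0) := by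
  classical
  unfold phi
  rw [← Finset.sum_erase_add _ _ (Finset.mem_univ e),
      ← Finset.sum_erase_add _ (fun e' => Wt (f e') z) (Finset.mem_univ e)]
  have h1 : ∀ e' ∈ Finset.univ.erase e, Wt (toggle f e a b e') z = Wt (f e') z := by
    intro e' he'
    rw [toggle_apply_ne (Finset.mem_erase.1 he').1]
  rw [Finset.sum_congr rfl h1]
  have h2 : Wt (toggle f e a b e) z = Wt (f e) z + (if a = z then 1 else 0) - (if b = z then 1 else 0) := by
    rw [toggle_apply_self]
    rcases hs with ⟨h1, _⟩ | h1
    · rw [if_pos h1, h1]; simp only [Wt]; ring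
    · rw [if_neg (by simp [h1]), h1]; simp only [Wt]; ring
  rw [h2]; ring

lemma chain_congr {S : M.E → M.V → M.V → Prop} {S' : M.E → M.V → M.V → Prop} {a c : M.V}
    {L : List (M.E × M.V × M.V)}
    (h : Chain S a c L) (hS : ∀ t ∈ L, ∀ x y, S t.1 x y → S' t.1 x y) :
    Chain S' a c L := by
  induction h with
  | nil v => exact Chain.nil v
  | @cons e a b c L hs hc ih =>
    exact Chain.cons (hS (e, a, b) List.mem_cons_self a b hs)
      (ih fun t ht => hS t (List.mem_cons_of_mem _ ht))

lemma augment_spec {f : M.E → Option (M.V × M.V)} {a c : M.V}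
    {L : List (M.E × M.V × M.V)} (h : Chain (M.ResStep f) a c L)
    (hnd : (L.map Prod.fst).Nodup) :
    (M.Valid f → M.Valid (augment f L)) ∧
    (∀ z, M.phi (augment f L) z
        = M.phi f z + (if a = z then 1 else 0) - (if c = z then 1 else 0)) ∧
    (∀ e, e ∉ L.map Prod.fst → augment f L e = f e) ∧
    (∀ t ∈ L, f t.1 ≠ none → augment f L t.1 = none) := by
  induction L generalizing f a with
  | nil =>
    cases h
    refine ⟨fun hv => hv, fun z => by simp only [augment]; ring, fun e _ => rfl, fun t ht => absurd ht (by simp)⟩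
  | cons t L ih =>
    obtain ⟨e, p, q⟩ := t
    obtain ⟨hp, hs, hc⟩ := chain_cons_inv h
    dsimp only at hp hs hc
    subst hp
    rw [List.map_cons, List.nodup_cons] at hnd
    obtain ⟨hne, hnd⟩ := hnd
    have hc' : Chain (M.ResStep (toggle f e p q)) q c L := by
      refine chain_congr hc fun t ht x y hxy => ?_
      have : t.1 ≠ e := fun hh => hne (List.mem_map.2 ⟨t, ht, hh⟩)
      rw [ResStep, toggle_apply_ne this]
      exact hxy
    obtain ⟨ih1, ih2, ih3, ih4⟩ := ih hc' hnd
    refine ⟨fun hv => ih1 (valid_toggle hs hv), fun z => ?_, fun e' he' => ?_, ?_⟩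
    · simp only [augment]
      rw [ih2 z, phi_toggle hs z]; ring
    · rw [List.map_cons, List.mem_cons, not_or] at he'
      rw [show augment f ((e,p,q) :: L) = augment (toggle f e p q) L from rfl,
        ih3 e' he'.2, toggle_apply_ne he'.1]
    · rintro t ht hu
      rcases List.mem_cons.1 ht with rfl | ht
      · dsimp only
        rw [show augment f ((e,p,q) :: L) = augment (toggle f e p q) L from rfl,
          ih3 e hne, toggle_apply_self, if_neg hu]
      · have ht1 : t.1 ≠ e := fun hh => hne (List.mem_map.2 ⟨t, ht, hh⟩)
        rw [show augment f ((e,p,q) :: L) = augment (toggle f e p q) L from rfl]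
        exact ih4 t ht (by rwa [toggle_apply_ne ht1])

end Multigraph
namespace Multigraph

variable {M : Multigraph}

lemma chain_steps {S : M.E → M.V → M.V → Prop} {a b : M.V} {L : List (M.E × M.V × M.V)}
    (h : Chain S a b L) : ∀ t ∈ L, S t.1 t.2.1 t.2.2 := by
  induction h with
  | nil v => simp
  | cons hs hc ih =>
    rintro t ht
    rcases List.mem_cons.1 ht with rfl | ht
    · exact hs
    · exact ih t ht

lemma chain_isWalk {f : M.E → Option (M.V × M.V)} (hv : M.Valid f) {a b : M.V}
    {L : List (M.E × M.V × M.V)} (h : Chain (M.FwdStep f) a b L) :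
    M.IsWalk a b (L.map Prod.fst) := by
  induction h with
  | nil v => exact IsWalk.nil v
  | cons hs hc ih => exact IsWalk.cons (hv hs) ih

lemma sum_phi (f : M.E → Option (M.V × M.V)) (R : Set M.V) :
    ∑ z ∈ (Set.toFinite R).toFinset, M.phi f z
      = (({e | ∃ a b, f e = some (a, b) ∧ a ∈ R ∧ b ∉ R} : Set M.E).ncard : ℤ)
        - (({e | ∃ a b, f e = some (a, b) ∧ a ∉ R ∧ b ∈ R} : Set M.E).ncard : ℤ) := by
  classical
  unfold phi
  rw [Finset.sum_comm]
  have inner : ∀ e : M.E, ∑ z ∈ (Set.toFinite R).toFinset, Wt (f e) z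
      = (if (∃ a b, f e = some (a, b) ∧ a ∈ R ∧ b ∉ R) then (1 : ℤ) else 0)
        - (if (∃ a b, f e = some (a, b) ∧ a ∉ R ∧ b ∈ R) then (1 : ℤ) else 0) := by
    intro e
    match hfe : f e with
    | none => simp [Wt]
    | some (a, b) =>
      simp only [Wt, Finset.sum_sub_distrib, Finset.sum_ite_eq, Set.Finite.mem_toFinset]
      have h1 : (∃ a' b', (some (a, b) : Option (M.V × M.V)) = some (a', b') ∧ a' ∈ R ∧ b' ∉ R)
          ↔ (a ∈ R ∧ b ∉ R) := by
        constructor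
        · rintro ⟨a', b', hab, h⟩
          injection hab with hab; injection hab with h1 h2
          exact h1 ▸ h2 ▸ h
        · exact fun h => ⟨a, b, rfl, h⟩
      have h2 : (∃ a' b', (some (a, b) : Option (M.V × M.V)) = some (a', b') ∧ a' ∉ R ∧ b' ∈ R)
          ↔ (a ∉ R ∧ b ∈ R) := by
        constructor
        · rintro ⟨a', b', hab, h⟩
          injection hab with hab; injection hab with h1 h2
          exact h1 ▸ h2 ▸ h
        · exact fun h => ⟨a, b, rfl, h⟩
      simp only [h1, h2]
      by_cases ha : a ∈ R <;> by_cases hb : b ∈ R <;> simp [ha, hb]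
  rw [Finset.sum_congr rfl fun e _ => inner e, Finset.sum_sub_distrib,
    Finset.sum_boole, Finset.sum_boole]
  have hc1 : ({e | ∃ a b, f e = some (a, b) ∧ a ∈ R ∧ b ∉ R} : Set M.E).ncard
      = (Finset.univ.filter fun e => ∃ a b, f e = some (a, b) ∧ a ∈ R ∧ b ∉ R).card := by
    rw [Set.ncard_eq_toFinset_card', Set.toFinset_setOf]
  have hc2 : ({e | ∃ a b, f e = some (a, b) ∧ a ∉ R ∧ b ∈ R} : Set M.E).ncard
      = (Finset.univ.filter fun e => ∃ a b, f e = some (a, b) ∧ a ∉ R ∧ b ∈ R).card := by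
    rw [Set.ncard_eq_toFinset_card', Set.toFinset_setOf]
  rw [hc1, hc2]

lemma sum_phi_flow {x y : M.V} {t : ℕ} {f : M.E → Option (M.V × M.V)}
    (hf : M.IsFlow x y t f) {R : Set M.V} (hx : x ∈ R) (hy : y ∉ R) :
    ∑ z ∈ (Set.toFinite R).toFinset, M.phi f z = (t : ℤ) := by
  rw [Finset.sum_eq_single_of_mem x ((Set.Finite.mem_toFinset _).2 hx)
    (fun z hz hne => hf.2.1 z hne (fun h => hy (h ▸ (Set.Finite.mem_toFinset _).1 hz)))]
  exact hf.2.2.1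

theorem exists_flow {x y : M.V} (hxy : x ≠ y) (k : ℕ)
    (hcut : ∀ F : Set M.E, ¬ M.ReachableOutside F x y → k ≤ F.ncard) :
    ∃ f, M.IsFlow x y k f := by
  suffices h : ∀ t, t ≤ k → ∃ f, M.IsFlow x y t f from h k le_rfl
  intro t ht
  induction t with
  | zero =>
    refine ⟨fun _ => none, ?_, ?_, ?_, ?_⟩
    · intro e a b h; cases h
    · intro z _ _; simp [phi, Wt]
    · simp [phi, Wt]
    · simp [phi, Wt]
  | succ t ih =>
    obtain ⟨f, hf⟩ := ih (le_of_lt ht)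
    set R : Set M.V := {z | ∃ L, Chain (M.ResStep f) x z L} with hR
    have hxR : x ∈ R := ⟨[], Chain.nil x⟩
    have hstep : ∀ a b e', a ∈ R → M.ResStep f e' a b → b ∈ R := by
      rintro a b e' ⟨L, hL⟩ hs
      exact ⟨L ++ [(e', a, b)], hL.append (Chain.cons hs (Chain.nil b))⟩
    have hyR : y ∈ R := by
      by_contra hy
      have hcross : ¬ M.ReachableOutside (M.cutSet R) x y := by
        rintro ⟨p, hw, hF⟩
        obtain ⟨e', he', hc⟩ := exists_mem_cutSet hw hxR hy
        exact hF e' he' hc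
      have hk := hcut _ hcross
      have hsub : M.cutSet R ⊆ {e | ∃ a b, f e = some (a, b) ∧ a ∈ R ∧ b ∉ R} := by
        rintro e' ⟨a, b, he', ha, hb⟩
        match hfe : f e' with
        | none => exact absurd (hstep a b e' ha (Or.inl ⟨hfe, he'⟩)) hb
        | some (p1, q1) =>
          have hends := hf.1 hfe
          rw [he'] at hends
          rw [Sym2.eq_iff] at hends
          rcases hends with ⟨h1, h2⟩ | ⟨h1, h2⟩
          · exact ⟨a, b, by rw [hfe, h1, h2], ha, hb⟩
          · exact absurd (hstep a b e' ha (Or.inr (by rw [hfe, h1, h2]))) hb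
      have hIn : ({e | ∃ a b, f e = some (a, b) ∧ a ∉ R ∧ b ∈ R} : Set M.E) = ∅ := by
        ext e'
        simp only [Set.mem_setOf_eq, Set.mem_empty_iff_false, iff_false, not_exists]
        rintro a b ⟨hfe, ha, hb⟩
        exact ha (hstep b a e' hb (Or.inr hfe))
      have hsum := sum_phi (M := M) f R
      have hval := sum_phi_flow hf hxR hy
      rw [hIn, hval] at hsum
      simp only [Set.ncard_empty, Nat.cast_zero, sub_zero] at hsum
      have hOut : ({e | ∃ a b, f e = some (a, b) ∧ a ∈ R ∧ b ∉ R} : Set M.E).ncard = t := by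
        exact_mod_cast hsum.symm
      have hle : (M.cutSet R).ncard ≤ t := hOut ▸ Set.ncard_le_ncard hsub (Set.toFinite _)
      omega
    obtain ⟨L, hL⟩ := hyR
    obtain ⟨L', hL', hnd⟩ := hL.dedup (resStep_coherent f)
    obtain ⟨hv, hphi, -, -⟩ := augment_spec hL' hnd
    refine ⟨augment f L', hv hf.1, fun z hzx hzy => ?_, ?_, ?_⟩
    · rw [hphi z, hf.2.1 z hzx hzy, if_neg fun h => hzx h.symm, if_neg fun h => hzy h.symm]
      ring
    · rw [hphi x, hf.2.2.1, if_pos rfl, if_neg fun h => hxy h.symm]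
      push_cast; ring
    · rw [hphi y, hf.2.2.2, if_neg hxy, if_pos rfl]
      push_cast; ring

end Multigraph
namespace Multigraph

variable {M : Multigraph}

theorem flow_decompose {x y : M.V} (hxy : x ≠ y) :
    ∀ t (f : M.E → Option (M.V × M.V)), M.IsFlow x y t f →
      ∃ P : Fin t → List M.E, (∀ i, M.IsWalk x y (P i)) ∧
        (∀ i, ∀ e ∈ P i, f e ≠ none) ∧
        (∀ i j, i ≠ j → ∀ e, e ∈ P i → e ∉ P j) := by
  intro t
  induction t with
  | zero =>
    intro f _
    exact ⟨fun _ => [], fun i => i.elim0, fun i => i.elim0, fun i => i.elim0⟩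
  | succ t ih =>
    intro f hf
    set R : Set M.V := {z | ∃ L, Chain (M.FwdStep f) x z L} with hRdef
    have hxR : x ∈ R := ⟨[], Chain.nil x⟩
    have hstep : ∀ a b e', a ∈ R → M.FwdStep f e' a b → b ∈ R := by
      rintro a b e' ⟨L, hL⟩ hs
      exact ⟨L ++ [(e', a, b)], hL.append (Chain.cons hs (Chain.nil b))⟩
    have hyR : y ∈ R := by
      by_contra hy
      have hOut : ({e | ∃ a b, f e = some (a, b) ∧ a ∈ R ∧ b ∉ R} : Set M.E) = ∅ := by
        ext e'
        simp only [Set.mem_setOf_eq, Set.mem_empty_iff_false, iff_false, not_exists]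
        rintro a b ⟨hfe, ha, hb⟩
        exact hb (hstep a b e' ha hfe)
      have hsum := sum_phi (M := M) f R
      have hval := sum_phi_flow hf hxR hy
      rw [hOut, hval] at hsum
      simp only [Set.ncard_empty, Nat.cast_zero, zero_sub] at hsum
      have : (0:ℤ) ≤ (({e | ∃ a b, f e = some (a, b) ∧ a ∉ R ∧ b ∈ R} : Set M.E).ncard : ℤ) :=
        Int.natCast_nonneg _
      omega
    obtain ⟨L, hL⟩ := hyR
    obtain ⟨L', hL', hnd⟩ := hL.dedup (fwdStep_coherent f)
    set trail := L'.map Prod.fst with htr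
    have hwalk : M.IsWalk x y trail := chain_isWalk hf.1 hL'
    have htrused : ∀ e ∈ trail, f e ≠ none := by
      intro e he
      obtain ⟨tt, htt, rfl⟩ := List.mem_map.1 he
      have := chain_steps hL' tt htt
      rw [this]
      simp
    set L'' := L'.reverse.map (fun t => (t.1, t.2.2, t.2.1)) with hL''def
    have hrev : Chain (fun e p q => M.FwdStep f e q p) y x L'' := hL'.reverse
    have hres : Chain (M.ResStep f) y x L'' :=
      chain_congr hrev fun t _ p q hpq => Or.inr hpq
    have hmapL'' : L''.map Prod.fst = trail.reverse := by
      rw [hL''def, htr, List.map_map, List.map_reverse]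
      rfl
    have hnd'' : (L''.map Prod.fst).Nodup := by
      rw [hmapL'']
      exact List.nodup_reverse.2 hnd
    have hmem'' : ∀ e, e ∈ L''.map Prod.fst ↔ e ∈ trail := by
      intro e; rw [hmapL'', List.mem_reverse]
    obtain ⟨gv, gphi, goff, gnone⟩ := augment_spec hres hnd''
    set g := augment f L'' with hgdef
    have hgnone : ∀ e ∈ trail, g e = none := by
      intro e he
      obtain ⟨tt, htt, heq⟩ := List.mem_map.1 ((hmem'' e).2 he)
      have hfw : M.FwdStep f tt.1 tt.2.2 tt.2.1 := chain_steps hrev tt htt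
      have : f tt.1 ≠ none := by rw [hfw]; simp
      rw [← heq]
      exact gnone tt htt this
    have hgoff : ∀ e, e ∉ trail → g e = f e := fun e he => goff e fun h => he ((hmem'' e).1 h)
    have hgflow : M.IsFlow x y t g := by
      refine ⟨gv hf.1, fun z hzx hzy => ?_, ?_, ?_⟩
      · rw [gphi z, hf.2.1 z hzx hzy, if_neg fun h => hzy h.symm, if_neg fun h => hzx h.symm]
        ring
      · rw [gphi x, hf.2.2.1, if_neg fun h => hxy h.symm, if_pos rfl]
        push_cast; ring
      · rw [gphi y, hf.2.2.2, if_pos rfl, if_neg hxy]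
        push_cast; ring
    obtain ⟨P', hP1, hP2, hP3⟩ := ih g hgflow
    have hP2' : ∀ i, ∀ e ∈ P' i, f e ≠ none ∧ e ∉ trail := by
      intro i e he
      have hg := hP2 i e he
      have hnt : e ∉ trail := fun ht => hg (hgnone e ht)
      exact ⟨by rwa [hgoff e hnt] at hg, hnt⟩
    refine ⟨Fin.cons trail P', ?_, ?_, ?_⟩
    · intro i
      induction i using Fin.cases with
      | zero => simpa using hwalk
      | succ j => simpa using hP1 j
    · intro i
      induction i using Fin.cases with
      | zero => simpa using htrused
      | succ j => simpa using fun e he => (hP2' j e he).1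
    · intro i j hij e'
      induction i using Fin.cases with
      | zero =>
        induction j using Fin.cases with
        | zero => exact absurd rfl hij
        | succ j =>
          intro he hm
          rw [Fin.cons_zero] at he
          rw [Fin.cons_succ] at hm
          exact (hP2' j e' hm).2 he
      | succ i =>
        induction j using Fin.cases with
        | zero =>
          intro he hm
          rw [Fin.cons_succ] at he
          rw [Fin.cons_zero] at hm
          exact (hP2' i e' he).2 hm
        | succ j =>
          intro he hm
          rw [Fin.cons_succ] at he hm
          exact hP3 i j (fun h => hij (congrArg Fin.succ h)) e' he hm

theorem menger (x y : M.V) (k : ℕ)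
    (h : ∀ F : Set M.E, ¬ M.ReachableOutside F x y → k ≤ F.ncard) :
    M.EdgeDisjointPaths x y k := by
  by_cases hxy : x = y
  · subst hxy
    exact ⟨fun _ => [], fun i => IsWalk.nil x,
      fun i j _ e he => absurd he List.not_mem_nil⟩
  · obtain ⟨f, hf⟩ := exists_flow hxy k h
    obtain ⟨P, h1, _, h3⟩ := flow_decompose hxy k f hf
    exact ⟨P, h1, h3⟩

end Multigraph
namespace Multigraph

lemma key_lemma (G : Multigraph) (s : G.V) (k : ℕ)
    (hcon : G.SKConnected s k)
    (e f : G.E) (he : s ∈ G.ends e) (hf : s ∈ G.ends f)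
    (hH : ¬ (G.lift s e f).SKConnected s k) :
    ∃ A : Set G.V, G.Dangerous s k A ∧ G.otherEnd s e ∈ A ∧ G.otherEnd s f ∈ A := by
  classical
  set u := G.otherEnd s e with hu
  set v := G.otherEnd s f with hv
  have hee : G.ends e = s(s, u) := ends_otherEnd he
  have hfe : G.ends f = s(s, v) := ends_otherEnd hf
  have hcard : 3 ≤ Fintype.card (G.lift s e f).V := by
    have h1 : Fintype.card (G.lift s e f).V = Fintype.card G.V := Fintype.card_congr (Equiv.refl G.V)
    rw [h1]; exact hcon.1
  have hall : ∃ x y : G.V, x ≠ s ∧ y ≠ s ∧ ¬ (G.lift s e f).EdgeDisjointPaths x y k := by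
    by_contra hc
    push_neg at hc
    exact hH ⟨hcard, fun a b ha hb => hc a b ha hb⟩
  obtain ⟨x, y, hx, hy, hnp⟩ := hall
  have hFex : ∃ F : Set (G.lift s e f).E, ¬ (G.lift s e f).ReachableOutside F x y ∧ F.ncard < k := by
    by_contra hc
    push_neg at hc
    exact hnp (menger (M := G.lift s e f) x y k fun F hF => hc F hF)
  obtain ⟨F, hFr, hFc⟩ := hFex
  set R : Set (G.lift s e f).V := {z | (G.lift s e f).ReachableOutside F x z} with hRdef
  have hxR : x ∈ R := ⟨[], IsWalk.nil (G := G.lift s e f) x, by simp⟩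
  have hyR : y ∉ R := hFr
  have hcutR : (G.lift s e f).cutSet R ⊆ F := by
    rintro e' ⟨a, b, he', ha, hb⟩
    by_contra hne
    obtain ⟨p, hw, hp⟩ := ha
    refine hb ⟨p ++ [e'], hw.append (IsWalk.cons he' (IsWalk.nil b)), ?_⟩
    intro e'' he''
    rcases List.mem_append.1 he'' with h | h
    · exact hp e'' h
    · rw [List.mem_singleton.1 h]; exact hne
  -- choose the side of the cut avoiding s
  obtain ⟨A, hsA, a, b, haA, has, hbA, hbs, hAcut⟩ :
      ∃ (A : Set G.V), s ∉ A ∧ ∃ a b : G.V, a ∈ A ∧ a ≠ s ∧ b ∉ A ∧ b ≠ s ∧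
        ((G.lift s e f).cutSet A).ncard < k := by
    by_cases hsR : s ∈ R
    · refine ⟨Rᶜ, fun h => h hsR, y, x, hyR, hy, fun h => h hxR, hx, ?_⟩
      show ((G.lift s e f).cutSet (Rᶜ : Set (G.lift s e f).V)).ncard < k
      rw [cutSet_compl]
      exact lt_of_le_of_lt (Set.ncard_le_ncard hcutR (Set.toFinite _)) hFc
    · refine ⟨R, hsR, x, y, hxR, hx, hyR, hy, ?_⟩
      exact lt_of_le_of_lt (Set.ncard_le_ncard hcutR (Set.toFinite _)) hFc
  have hk_le : k ≤ (G.cutSet A).ncard :=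
    le_ncard_cutSet haA hbA (hcon.2 a b has hbs)
  -- projection from lifted edges to original edges
  set proj : (G.lift s e f).E → G.E := fun z => match z with
    | Sum.inl w => w.1
    | Sum.inr _ => e
    with hproj
  have hinl : ∀ (g' : G.E) (hg1 : g' ≠ e) (hg2 : g' ≠ f), g' ∈ G.cutSet A →
      (Sum.inl ⟨g', hg1, hg2⟩ : (G.lift s e f).E) ∈ (G.lift s e f).cutSet A := by
    rintro g' hg1 hg2 ⟨a', b', hab, ha', hb'⟩
    exact ⟨a', b', hab, ha', hb'⟩
  have he_notcut : u ∉ A → e ∉ G.cutSet A := by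
    rintro hus ⟨a', b', hab, ha', hb'⟩
    rw [hee, Sym2.eq_iff] at hab
    rcases hab with ⟨h1, h2⟩ | ⟨h1, h2⟩
    · exact hsA (by rwa [← h1] at ha')
    · exact hus (by rwa [← h2] at ha')
  have hf_notcut : v ∉ A → f ∉ G.cutSet A := by
    rintro hvs ⟨a', b', hab, ha', hb'⟩
    rw [hfe, Sym2.eq_iff] at hab
    rcases hab with ⟨h1, h2⟩ | ⟨h1, h2⟩
    · exact hsA (by rwa [← h1] at ha')
    · exact hvs (by rwa [← h2] at ha')
  by_cases huA : u ∈ A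
  · by_cases hvA : v ∈ A
    · -- the good case
      refine ⟨A, ⟨⟨a, haA⟩, hsA, ⟨b, ?_⟩, ?_⟩, huA, hvA⟩
      · simp only [Set.mem_compl_iff, Set.mem_union, Set.mem_singleton_iff, not_or]
        exact ⟨hbA, hbs⟩
      · have hsub : G.cutSet A ⊆ (proj '' ((G.lift s e f).cutSet A)) ∪ {e, f} := by
          intro g' hg'
          by_cases h1 : g' = e
          · exact Or.inr (by simp [h1])
          by_cases h2 : g' = f
          · exact Or.inr (by simp [h2])
          · exact Or.inl ⟨Sum.inl ⟨g', h1, h2⟩, hinl g' h1 h2 hg', rfl⟩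
        have h3 := Set.ncard_le_ncard hsub (Set.toFinite _)
        have h4 := Set.ncard_union_le (proj '' ((G.lift s e f).cutSet A)) ({e, f} : Set G.E)
        have h5 := Set.ncard_image_le (s := (G.lift s e f).cutSet A) (f := proj) (Set.toFinite _)
        have h6 : ({e, f} : Set G.E).ncard ≤ 2 :=
          le_trans (Set.ncard_insert_le _ _) (by simp)
        omega
    · -- bad case: u ∈ A, v ∉ A
      exfalso
      have huv : u ≠ v := fun h => hvA (h ▸ huA)
      set g : (G.lift s e f).E := Sum.inr ⟨huv⟩ with hg
      have hgcut : g ∈ (G.lift s e f).cutSet A := ⟨u, v, rfl, huA, hvA⟩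
      have hsub : G.cutSet A ⊆ (proj '' ((G.lift s e f).cutSet A \ {g})) ∪ {e} := by
        intro g' hg'
        have h2 : g' ≠ f := fun hh => hf_notcut hvA (hh ▸ hg')
        by_cases h1 : g' = e
        · exact Or.inr (by simp [h1])
        · exact Or.inl ⟨Sum.inl ⟨g', h1, h2⟩, ⟨hinl g' h1 h2 hg', by simp [hg]; exact fun h => Sum.inl_ne_inr (Set.mem_singleton_iff.1 h)⟩, rfl⟩
      have h3 := Set.ncard_le_ncard hsub (Set.toFinite _)
      have h4 := Set.ncard_union_le (proj '' ((G.lift s e f).cutSet A \ {g})) ({e} : Set G.E)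
      have h5 := Set.ncard_image_le (s := (G.lift s e f).cutSet A \ {g}) (f := proj) (Set.toFinite _)
      have h6 := Set.ncard_diff_singleton_add_one hgcut (Set.toFinite _)
      simp only [Set.ncard_singleton] at h4
      omega
  · by_cases hvA : v ∈ A
    · -- bad case: u ∉ A, v ∈ A
      exfalso
      have huv : u ≠ v := fun h => huA (h ▸ hvA)
      set g : (G.lift s e f).E := Sum.inr ⟨huv⟩ with hg
      have hgcut : g ∈ (G.lift s e f).cutSet A := ⟨v, u, Sym2.eq_swap, hvA, huA⟩
      have hsub : G.cutSet A ⊆ (proj '' ((G.lift s e f).cutSet A \ {g})) ∪ {f} := by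
        intro g' hg'
        have h1 : g' ≠ e := fun hh => he_notcut huA (hh ▸ hg')
        by_cases h2 : g' = f
        · exact Or.inr (by simp [h2])
        · exact Or.inl ⟨Sum.inl ⟨g', h1, h2⟩, ⟨hinl g' h1 h2 hg', by simp [hg]; exact fun h => Sum.inl_ne_inr (Set.mem_singleton_iff.1 h)⟩, rfl⟩
      have h3 := Set.ncard_le_ncard hsub (Set.toFinite _)
      have h4 := Set.ncard_union_le (proj '' ((G.lift s e f).cutSet A \ {g})) ({f} : Set G.E)
      have h5 := Set.ncard_image_le (s := (G.lift s e f).cutSet A \ {g}) (f := proj) (Set.toFinite _)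
      have h6 := Set.ncard_diff_singleton_add_one hgcut (Set.toFinite _)
      simp only [Set.ncard_singleton] at h4
      omega
    · -- bad case: u ∉ A, v ∉ A
      exfalso
      have hsub : G.cutSet A ⊆ proj '' ((G.lift s e f).cutSet A) := by
        intro g' hg'
        have h1 : g' ≠ e := fun hh => he_notcut huA (hh ▸ hg')
        have h2 : g' ≠ f := fun hh => hf_notcut hvA (hh ▸ hg')
        exact ⟨Sum.inl ⟨g', h1, h2⟩, hinl g' h1 h2 hg', rfl⟩
      have h3 := Set.ncard_le_ncard hsub (Set.toFinite _)
      have h5 := Set.ncard_image_le (s := (G.lift s e f).cutSet A) (f := proj) (Set.toFinite _)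
      omega

end Multigraph

/-- a non-liftable pair of edges at `s` yields a dangerous set
containing both their other ends. -/
theorem dangerous_set_of_not_liftable (G : Multigraph) (s : G.V) (k : ℕ)
    (hcon : G.SKConnected s k) (hdeg : 2 ≤ G.deg s)
    (e f : G.E) (he : s ∈ G.ends e) (hf : s ∈ G.ends f) (hef : e ≠ f)
    (hnl : ¬ G.IsLiftable s k e f) :
    ∃ A : Set G.V, G.Dangerous s k A ∧ G.otherEnd s e ∈ A ∧ G.otherEnd s f ∈ A := by
  by_cases h1 : (G.lift s e f).SKConnected s k
  · have h2 : ¬ (G.lift s f e).SKConnected s k := fun h2 => hnl ⟨h1, h2⟩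
    obtain ⟨A, hA, hfA, heA⟩ := Multigraph.key_lemma G s k hcon f e hf he h2
    exact ⟨A, hA, heA, hfA⟩
  · exact Multigraph.key_lemma G s k hcon e f he hf h1
end

section
/- Let G be an (s,k)-edge-connected graph such that s is not incident with a cut-edge, and let I be an independent set of size at least 2 in the lifting graph L(G,s,k) with I ≠ V(L(G,s,k)). Then there is a unique minimal k-dangerous set A in G containing the non-s endpoints of all edges of I; i.e., any two minimal dangerous sets corresponding to I coincide. -/
namespace Multigraph

variable {G : Multigraph}

lemma mem_cutSet_iff' {e : G.E} {u v : G.V} (h : G.ends e = s(u, v)) {A : Set G.V} :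
    e ∈ G.cutSet A ↔ ((u ∈ A ∧ v ∉ A) ∨ (v ∈ A ∧ u ∉ A)) := by
  constructor
  · rintro ⟨a, b, hab, ha, hb⟩
    rw [h] at hab
    rcases Sym2.eq_iff.1 hab with ⟨rfl, rfl⟩ | ⟨rfl, rfl⟩
    · exact Or.inl ⟨ha, hb⟩
    · exact Or.inr ⟨ha, hb⟩
  · rintro (⟨ha, hb⟩ | ⟨ha, hb⟩)
    · exact ⟨u, v, h, ha, hb⟩
    · exact ⟨v, u, by rw [h, Sym2.eq_swap], ha, hb⟩

lemma mem_between_iff' {e : G.E} {u v : G.V} (h : G.ends e = s(u, v)) {A B : Set G.V} :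
    e ∈ G.between A B ↔ ((u ∈ A ∧ v ∈ B) ∨ (v ∈ A ∧ u ∈ B)) := by
  constructor
  · rintro ⟨a, b, hab, ha, hb⟩
    rw [h] at hab
    rcases Sym2.eq_iff.1 hab with ⟨rfl, rfl⟩ | ⟨rfl, rfl⟩
    · exact Or.inl ⟨ha, hb⟩
    · exact Or.inr ⟨ha, hb⟩
  · rintro (⟨ha, hb⟩ | ⟨ha, hb⟩)
    · exact ⟨u, v, h, ha, hb⟩
    · exact ⟨v, u, by rw [h, Sym2.eq_swap], ha, hb⟩

open scoped Classical in
lemma ncard_eq_sum (S : Set G.E) :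
    S.ncard = ∑ e : G.E, if e ∈ S then 1 else 0 := by
  rw [← Finset.card_filter]
  rw [Set.ncard_eq_toFinset_card']
  congr 1
  ext e
  simp

lemma cut_submodular (A B : Set G.V) :
    (G.cutSet (A \ B)).ncard + (G.cutSet (B \ A)).ncard
      + 2 * (G.between (A ∩ B) (A ∪ B)ᶜ).ncard
      ≤ (G.cutSet A).ncard + (G.cutSet B).ncard := by
  classical
  simp_rw [ncard_eq_sum, Finset.mul_sum, ← Finset.sum_add_distrib]
  apply Finset.sum_le_sum
  intro e _
  obtain ⟨⟨u, v⟩, h⟩ := Quot.exists_rep (G.ends e)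
  have h : G.ends e = s(u, v) := h.symm
  simp only [mem_cutSet_iff' h, mem_between_iff' h]
  by_cases huA : u ∈ A <;> by_cases huB : u ∈ B <;>
    by_cases hvA : v ∈ A <;> by_cases hvB : v ∈ B <;>
    simp [huA, huB, hvA, hvB]

lemma exists_cut_edge_of_walk {u v : G.V} {p : List G.E} (hw : G.IsWalk u v p)
    {X : Set G.V} (hu : u ∈ X) (hv : v ∉ X) : ∃ e ∈ p, e ∈ G.cutSet X := by
  induction hw with
  | nil w => exact absurd hu hv
  | @cons a b c e q he hq ih =>
    by_cases hb : b ∈ X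
    · obtain ⟨f, hf, hfc⟩ := ih hb hv
      exact ⟨f, List.mem_cons_of_mem _ hf, hfc⟩
    · exact ⟨e, List.mem_cons_self, ⟨a, b, he, hu, hb⟩⟩

lemma k_le_cut {s : G.V} {k : ℕ} (hcon : G.SKConnected s k) {X : Set G.V}
    (hX : X.Nonempty) (hs : s ∉ X) (hmiss : ∃ v, v ∉ X ∧ v ≠ s) :
    k ≤ (G.cutSet X).ncard := by
  classical
  obtain ⟨u, hu⟩ := hX
  obtain ⟨v, hv, hvs⟩ := hmiss
  obtain ⟨P, hP, hdis⟩ := hcon.2 u v (fun h => hs (h ▸ hu)) hvs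
  choose f hf1 hf2 using fun i => exists_cut_edge_of_walk (hP i) hu hv
  have hinj : Function.Injective f := by
    intro i j hij
    by_contra hne
    exact hdis i j hne (f i) (hf1 i) (hij ▸ hf1 j)
  calc k = (Set.range f).ncard := by
        rw [Set.ncard_eq_toFinset_card', Set.toFinset_range,
          Finset.card_image_of_injective _ hinj, Finset.card_fin]
    _ ≤ (G.cutSet X).ncard :=
        Set.ncard_le_ncard (Set.range_subset_iff.2 hf2) (Set.toFinite _)

lemma ends_eq_otherEnd {s : G.V} {e : G.E} (h : s ∈ G.ends e) :
    G.ends e = s(s, G.otherEnd s e) := by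
  rw [otherEnd, dif_pos h]
  exact (Sym2.other_spec' h).symm

lemma otherEnd_ne {s : G.V} {e : G.E} (h : s ∈ G.ends e) :
    G.otherEnd s e ≠ s := by
  intro heq
  apply G.loopless e
  rw [ends_eq_otherEnd h, heq]
  exact Sym2.mk_isDiag_iff.2 rfl

end Multigraph

/-- uniqueness of the minimal dangerous set corresponding to an
independent set of the lifting graph. -/
theorem unique_minimal_dangerous (G : Multigraph) (s : G.V) (k : ℕ)
    (hcon : G.SKConnected s k)
    (hcut : ∀ e, s ∈ G.ends e → ¬ G.IsCutEdge e)
    (I : Set ↥(G.incEdges s))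
    (hI : IndepSet (G.liftingGraph s k) I)
    (hI2 : 2 ≤ I.ncard) (hIne : I ≠ Set.univ)
    (A₁ A₂ : Set G.V)
    (h₁ : G.MinCorrDangerous s k I A₁) (h₂ : G.MinCorrDangerous s k I A₂) :
    A₁ = A₂ := by
  classical
  obtain ⟨e₁, e₂, he₁, he₂, hne⟩ :=
    (Set.one_lt_ncard_iff (Set.toFinite I)).1 (by omega : 1 < I.ncard)
  have hne' : e₁.1 ≠ e₂.1 := fun h => hne (Subtype.ext h)
  have hs1 : s ∉ A₁ := h₁.1.1.2.1
  have hs2 : s ∉ A₂ := h₂.1.1.2.1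
  have ht1 : G.otherEnd s e₁.1 ∈ A₁ ∩ A₂ :=
    ⟨h₁.1.2 e₁ he₁, h₂.1.2 e₁ he₁⟩
  have ht2 : G.otherEnd s e₂.1 ∈ A₁ ∩ A₂ :=
    ⟨h₁.1.2 e₂ he₂, h₂.1.2 e₂ he₂⟩
  by_cases hd1 : A₁ \ A₂ = ∅
  · exact h₂.2 A₁ h₁.1 (Set.diff_eq_empty.1 hd1)
  by_cases hd2 : A₂ \ A₁ = ∅
  · exact (h₁.2 A₂ h₂.1 (Set.diff_eq_empty.1 hd2)).symm
  -- derive a contradiction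
  exfalso
  have hsU : s ∈ (A₁ ∪ A₂)ᶜ := fun h => h.elim hs1 hs2
  have hbet : {e₁.1, e₂.1} ⊆ G.between (A₁ ∩ A₂) (A₁ ∪ A₂)ᶜ := by
    rintro e (rfl | rfl)
    · exact ⟨G.otherEnd s e₁.1, s, by rw [Multigraph.ends_eq_otherEnd e₁.2, Sym2.eq_swap], ht1, hsU⟩
    · exact ⟨G.otherEnd s e₂.1, s, by rw [Multigraph.ends_eq_otherEnd e₂.2, Sym2.eq_swap], ht2, hsU⟩
  have hbet2 : 2 ≤ (G.between (A₁ ∩ A₂) (A₁ ∪ A₂)ᶜ).ncard := by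
    rw [← Set.ncard_pair hne']
    exact Set.ncard_le_ncard hbet (Set.toFinite _)
  have hk1 : k ≤ (G.cutSet (A₁ \ A₂)).ncard := by
    refine Multigraph.k_le_cut hcon (Set.nonempty_iff_ne_empty.2 hd1)
      (fun h => hs1 h.1) ⟨G.otherEnd s e₁.1, fun h => h.2 ht1.2, Multigraph.otherEnd_ne e₁.2⟩
  have hk2 : k ≤ (G.cutSet (A₂ \ A₁)).ncard := by
    refine Multigraph.k_le_cut hcon (Set.nonempty_iff_ne_empty.2 hd2)
      (fun h => hs2 h.1) ⟨G.otherEnd s e₁.1, fun h => h.2 ht1.1, Multigraph.otherEnd_ne e₁.2⟩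
  have hsub := Multigraph.cut_submodular (G := G) A₁ A₂
  have hb1 : (G.cutSet A₁).ncard ≤ k + 1 := h₁.1.1.2.2.2
  have hb2 : (G.cutSet A₂).ncard ≤ k + 1 := h₂.1.1.2.2.2
  omega
end

section
/- Let G be an (s,k)-edge-connected graph with k ≥ 3 odd, and let A₁, A₂, A₃ be three distinct k-dangerous sets such that for all distinct i,j ∈ {1,2,3}: (a) Aᵢ∩Aⱼ contains at most one neighbour of s; (b) |δ(Aᵢ∩Aⱼ : Aⱼ\Aᵢ)| = (k−1)/2; (c) |δ(Aᵢ\Aⱼ : Aⱼ\Aᵢ)| = 0; (d) in G−s there are no edges between Aᵢ∩Aⱼ and the complement of Aᵢ∪Aⱼ. Then A₁ ∩ A₂ ∩ A₃ = ∅. -/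
namespace Multigraph

variable {G : Multigraph}

lemma mem_between {P Q : Set G.V} {u v : G.V} {e : G.E}
    (he : G.ends e = s(u,v)) (hu : u ∈ P) (hv : v ∈ Q) : e ∈ G.between P Q :=
  ⟨u, v, he, hu, hv⟩

lemma mem_between' {P Q : Set G.V} {u v : G.V} {e : G.E}
    (he : G.ends e = s(u,v)) (hv : v ∈ P) (hu : u ∈ Q) : e ∈ G.between P Q :=
  ⟨v, u, he.trans (Sym2.eq_swap), hv, hu⟩

lemma between_mono {P P' Q Q' : Set G.V} (hP : P ⊆ P') (hQ : Q ⊆ Q') :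
    G.between P Q ⊆ G.between P' Q' := by
  rintro e ⟨u, v, he, hu, hv⟩
  exact ⟨u, v, he, hP hu, hQ hv⟩

lemma noedge {P Q : Set G.V} (hPQ : G.between P Q = ∅) {e : G.E} {u v : G.V}
    (he : G.ends e = s(u,v)) (h : (u ∈ P ∧ v ∈ Q) ∨ (v ∈ P ∧ u ∈ Q)) : False := by
  apply Set.notMem_empty e
  rw [← hPQ]
  rcases h with ⟨h1, h2⟩ | ⟨h1, h2⟩
  exacts [mem_between he h1 h2, mem_between' he h1 h2]

lemma between_disjoint {P Q P' Q' : Set G.V} (h1 : Disjoint P P') (h2 : Disjoint Q P') :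
    Disjoint (G.between P Q) (G.between P' Q') := by
  rw [Set.disjoint_left]
  rintro e ⟨u, v, he, hu, hv⟩ ⟨u', v', he', hu', hv'⟩
  rw [he, Sym2.eq_iff] at he'
  rcases he' with ⟨rfl, rfl⟩ | ⟨rfl, rfl⟩
  · exact Set.disjoint_left.mp h1 hu hu'
  · exact Set.disjoint_left.mp h2 hv hu'

lemma between_split {P Q₁ Q₂ : Set G.V} (h12 : Disjoint Q₁ Q₂) (h2 : Disjoint P Q₂) :
    (G.between P (Q₁ ∪ Q₂)).ncard = (G.between P Q₁).ncard + (G.between P Q₂).ncard := by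
  have heq : G.between P (Q₁ ∪ Q₂) = G.between P Q₁ ∪ G.between P Q₂ := by
    ext e
    constructor
    · rintro ⟨u, v, he, hu, hv | hv⟩
      exacts [Or.inl ⟨u, v, he, hu, hv⟩, Or.inr ⟨u, v, he, hu, hv⟩]
    · rintro (⟨u, v, he, hu, hv⟩ | ⟨u, v, he, hu, hv⟩)
      exacts [⟨u, v, he, hu, Or.inl hv⟩, ⟨u, v, he, hu, Or.inr hv⟩]
  rw [heq, Set.ncard_union_eq ?_]
  rw [Set.disjoint_left]
  rintro e ⟨u, v, he, hu, hv⟩ ⟨u', v', he', hu', hv'⟩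
  rw [he, Sym2.eq_iff] at he'
  rcases he' with ⟨rfl, rfl⟩ | ⟨rfl, rfl⟩
  · exact Set.disjoint_left.mp h12 hv hv'
  · exact Set.disjoint_left.mp h2 hu hv'

lemma between_empty_right {P : Set G.V} : G.between P ∅ = ∅ := by
  apply Set.eq_empty_iff_forall_notMem.mpr
  rintro e ⟨u, v, he, hu, hv⟩
  exact hv

lemma between_empty_left {Q : Set G.V} : G.between ∅ Q = ∅ := by
  apply Set.eq_empty_iff_forall_notMem.mpr
  rintro e ⟨u, v, he, hu, hv⟩
  exact hu

lemma sum2_le {T g1 g2 : Set G.E} (h1 : g1 ⊆ T) (h2 : g2 ⊆ T) (d : Disjoint g1 g2) :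
    g1.ncard + g2.ncard ≤ T.ncard := by
  rw [← Set.ncard_union_eq d]
  exact Set.ncard_le_ncard (Set.union_subset h1 h2)

lemma sum3_le {T g1 g2 g3 : Set G.E} (h1 : g1 ⊆ T) (h2 : g2 ⊆ T) (h3 : g3 ⊆ T)
    (d12 : Disjoint g1 g2) (d13 : Disjoint g1 g3) (d23 : Disjoint g2 g3) :
    g1.ncard + g2.ncard + g3.ncard ≤ T.ncard := by
  rw [← Set.ncard_union_eq d12, ← Set.ncard_union_eq (Set.disjoint_union_left.mpr ⟨d13, d23⟩)]
  exact Set.ncard_le_ncard (Set.union_subset (Set.union_subset h1 h2) h3)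

lemma le_sum2 {T g1 g2 : Set G.E} (h : T ⊆ g1 ∪ g2) :
    T.ncard ≤ g1.ncard + g2.ncard :=
  le_trans (Set.ncard_le_ncard h) (Set.ncard_union_le _ _)

lemma le_sum4 {T g1 g2 g3 g4 : Set G.E} (h : T ⊆ g1 ∪ g2 ∪ g3 ∪ g4) :
    T.ncard ≤ g1.ncard + g2.ncard + g3.ncard + g4.ncard := by
  calc T.ncard ≤ (g1 ∪ g2 ∪ g3 ∪ g4).ncard := Set.ncard_le_ncard h
    _ ≤ (g1 ∪ g2 ∪ g3).ncard + g4.ncard := Set.ncard_union_le _ _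
    _ ≤ ((g1 ∪ g2).ncard + g3.ncard) + g4.ncard :=
        Nat.add_le_add_right (Set.ncard_union_le _ _) _
    _ ≤ ((g1.ncard + g2.ncard) + g3.ncard) + g4.ncard :=
        Nat.add_le_add_right (Nat.add_le_add_right (Set.ncard_union_le _ _) _) _

lemma walk_crosses {S : Set G.V} {u w : G.V} {p : List G.E}
    (h : G.IsWalk u w p) (hu : u ∈ S) (hw : w ∉ S) :
    ∃ e, e ∈ p ∧ e ∈ G.cutSet S := by
  revert hu hw
  induction h with
  | nil v => intro hu hw; exact absurd hu hw
  | @cons u v w e p he hp ih =>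
    intro hu hw
    by_cases hv : v ∈ S
    · obtain ⟨e', h1, h2⟩ := ih hv hw
      exact ⟨e', List.mem_cons_of_mem _ h1, h2⟩
    · exact ⟨e, List.mem_cons_self, u, v, he, hu, hv⟩

lemma cut_lb {s : G.V} {k : ℕ} (hcon : G.SKConnected s k) {S : Set G.V} {u w : G.V}
    (hu : u ∈ S) (hus : u ≠ s) (hw : w ∉ S) (hws : w ≠ s) :
    k ≤ (G.cutSet S).ncard := by
  obtain ⟨P, hP, hdisj⟩ := hcon.2 u w hus hws
  have hex : ∀ i, ∃ e, e ∈ P i ∧ e ∈ G.cutSet S := fun i => walk_crosses (hP i) hu hw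
  choose f hf1 hf2 using hex
  have hinj : Function.Injective fun i => (⟨f i, hf2 i⟩ : ↥(G.cutSet S)) := by
    intro i j hij
    by_contra hne
    have : f i = f j := congrArg Subtype.val hij
    exact hdisj i j hne (f i) (hf1 i) (this ▸ hf1 j)
  calc k = Nat.card (Fin k) := by simp
    _ ≤ Nat.card ↥(G.cutSet S) := Nat.card_le_card_of_injective _ hinj
    _ = (G.cutSet S).ncard := Nat.card_coe_set_eq _

end Multigraph

private lemma statement8_arith (k m na nb nc ns nsa nsb nsc p1 p2 p3 p4 p5 p6 : ℕ)
    (hk : 3 ≤ k) (hm : k = 2*m+1)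
    (f1l : na + p2 ≤ (k-1)/2) (f1u : (k-1)/2 ≤ na + p2)
    (f2l : nb + p1 ≤ (k-1)/2) (f2u : (k-1)/2 ≤ nb + p1)
    (f3l : na + p4 ≤ (k-1)/2) (f3u : (k-1)/2 ≤ na + p4)
    (f4l : nc + p3 ≤ (k-1)/2) (f4u : (k-1)/2 ≤ nc + p3)
    (f5l : nb + p6 ≤ (k-1)/2) (f5u : (k-1)/2 ≤ nb + p6)
    (f6l : nc + p5 ≤ (k-1)/2) (f6u : (k-1)/2 ≤ nc + p5)
    (lowX : k ≤ nc + nb + na + ns)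
    (brPbc : (na = 0 ∧ p5 = 0 ∧ p6 = 0 ∧ nsa = 0) ∨ k ≤ na + p5 + p6 + nsa)
    (brPac : (nb = 0 ∧ p3 = 0 ∧ p4 = 0 ∧ nsb = 0) ∨ k ≤ nb + p3 + p4 + nsb)
    (brPab : (nc = 0 ∧ p1 = 0 ∧ p2 = 0 ∧ nsc = 0) ∨ k ≤ nc + p1 + p2 + nsc)
    (upA : na + ns + (p2 + nsc) + (p4 + nsb) ≤ k + 1)
    (upB : nb + ns + (p1 + nsc) + (p6 + nsa) ≤ k + 1)
    (upC : nc + ns + (p3 + nsb) + (p5 + nsa) ≤ k + 1) : False := by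
  rcases brPbc with ⟨ea1, ea2, ea3, ea4⟩ | hlow1 <;>
    rcases brPac with ⟨eb1, eb2, eb3, eb4⟩ | hlow2 <;>
    rcases brPab with ⟨ec1, ec2, ec3, ec4⟩ | hlow3 <;> omega


set_option linter.all false in
set_option maxHeartbeats 4000000 in
open Multigraph in
/-- three pairwise "nicely intersecting" dangerous sets have
empty common intersection. -/
theorem three_dangerous_empty_inter (G : Multigraph) (s : G.V) (k : ℕ)
    (hk : 3 ≤ k) (hkodd : Odd k) (hcon : G.SKConnected s k)
    (A : Fin 3 → Set G.V) (hinj : Function.Injective A)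
    (hdang : ∀ i, G.Dangerous s k (A i))
    (ha : ∀ i j, i ≠ j → ((A i ∩ A j) ∩ G.neighborSet s).ncard ≤ 1)
    (hb : ∀ i j, i ≠ j → (G.between (A i ∩ A j) (A j \ A i)).ncard = (k - 1) / 2)
    (hc : ∀ i j, i ≠ j → G.between (A i \ A j) (A j \ A i) = ∅)
    (hd : ∀ i j, i ≠ j → G.between (A i ∩ A j) (A i ∪ A j ∪ {s})ᶜ = ∅) :
    A 0 ∩ A 1 ∩ A 2 = ∅ := by
  obtain ⟨m, hm⟩ := hkodd
  have hs0 : s ∉ A 0 := (hdang 0).2.1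
  have hs1 : s ∉ A 1 := (hdang 1).2.1
  have hs2 : s ∉ A 2 := (hdang 2).2.1
  have hcut0 : (G.cutSet (A 0)).ncard ≤ k + 1 := (hdang 0).2.2.2
  have hcut1 : (G.cutSet (A 1)).ncard ≤ k + 1 := (hdang 1).2.2.2
  have hcut2 : (G.cutSet (A 2)).ncard ≤ k + 1 := (hdang 2).2.2.2
  have hc01 := hc 0 1 (by decide)
  have hc02 := hc 0 2 (by decide)
  have hc12 := hc 1 2 (by decide)
  have hc21 := hc 2 1 (by decide)
  have hd01 := hd 0 1 (by decide)
  have hd02 := hd 0 2 (by decide)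
  have hd12 := hd 1 2 (by decide)
  have hb01 := hb 0 1 (by decide)
  have hb10 := hb 1 0 (by decide)
  rw [Set.inter_comm (A 1) (A 0)] at hb10
  have hb02 := hb 0 2 (by decide)
  have hb20 := hb 2 0 (by decide)
  rw [Set.inter_comm (A 2) (A 0)] at hb20
  have hb12 := hb 1 2 (by decide)
  have hb21 := hb 2 1 (by decide)
  rw [Set.inter_comm (A 2) (A 1)] at hb21
  -- helpers
  have hcompl : ∀ {v : G.V} {P Q : Set G.V}, v ∉ P → v ∉ Q → v ≠ s →
      v ∈ (P ∪ Q ∪ ({s} : Set G.V))ᶜ :=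
    fun h1 h2 h3 hm' => Or.elim hm' (fun h' => Or.elim h' h1 h2) h3
  -- assume the intersection is nonempty
  by_contra hne
  rw [← Ne, ← Set.nonempty_iff_ne_empty] at hne
  obtain ⟨x0, hx0⟩ := hne
  have hx0s : x0 ≠ s := fun h => hs0 (h ▸ hx0.1.1)
  obtain ⟨w0, hw0'⟩ := (hdang 0).2.2.1
  have hw0 : w0 ∉ A 0 ∧ w0 ≠ s := by
    constructor
    · exact fun h => hw0' (Or.inl h)
    · exact fun h => hw0' (Or.inr h)
  obtain ⟨w1, hw1'⟩ := (hdang 1).2.2.1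
  have hw1 : w1 ∉ A 1 ∧ w1 ≠ s := by
    constructor
    · exact fun h => hw1' (Or.inl h)
    · exact fun h => hw1' (Or.inr h)
  -- region disjointness kit
  have dXPab : Disjoint (A 0 ∩ A 1 ∩ A 2) ((A 0 ∩ A 1) \ A 2) :=
    Set.disjoint_left.mpr fun x hx hy => hy.2 hx.2
  have dXPac : Disjoint (A 0 ∩ A 1 ∩ A 2) ((A 0 ∩ A 2) \ A 1) :=
    Set.disjoint_left.mpr fun x hx hy => hy.2 hx.1.2
  have dXPbc : Disjoint (A 0 ∩ A 1 ∩ A 2) ((A 1 ∩ A 2) \ A 0) :=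
    Set.disjoint_left.mpr fun x hx hy => hy.2 hx.1.1
  have dPabPac : Disjoint ((A 0 ∩ A 1) \ A 2) ((A 0 ∩ A 2) \ A 1) :=
    Set.disjoint_left.mpr fun x hx hy => hy.2 hx.1.2
  have dPabPbc : Disjoint ((A 0 ∩ A 1) \ A 2) ((A 1 ∩ A 2) \ A 0) :=
    Set.disjoint_left.mpr fun x hx hy => hy.2 hx.1.1
  have dPacPbc : Disjoint ((A 0 ∩ A 2) \ A 1) ((A 1 ∩ A 2) \ A 0) :=
    Set.disjoint_left.mpr fun x hx hy => hy.2 hx.1.1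
  have sX : s ∉ A 0 ∩ A 1 ∩ A 2 := fun h => hs0 h.1.1
  have sPab : s ∉ (A 0 ∩ A 1) \ A 2 := fun h => hs0 h.1.1
  have sPac : s ∉ (A 0 ∩ A 2) \ A 1 := fun h => hs0 h.1.1
  have sPbc : s ∉ (A 1 ∩ A 2) \ A 0 := fun h => hs1 h.1.1
  have sQa : s ∉ A 0 \ (A 1 ∪ A 2) := fun h => hs0 h.1
  have sQb : s ∉ A 1 \ (A 0 ∪ A 2) := fun h => hs1 h.1
  have sQc : s ∉ A 2 \ (A 0 ∪ A 1) := fun h => hs2 h.1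
  have dsX := Set.disjoint_singleton_right.mpr sX
  have dsPab := Set.disjoint_singleton_right.mpr sPab
  have dsPac := Set.disjoint_singleton_right.mpr sPac
  have dsPbc := Set.disjoint_singleton_right.mpr sPbc
  have dsQa := Set.disjoint_singleton_right.mpr sQa
  have dsQb := Set.disjoint_singleton_right.mpr sQb
  have dsQc := Set.disjoint_singleton_right.mpr sQc
  have dQbPac : Disjoint (A 1 \ (A 0 ∪ A 2)) ((A 0 ∩ A 2) \ A 1) :=
    Set.disjoint_left.mpr fun x hx hy => hx.2 (Or.inl hy.1.1)
  have dQaPbc : Disjoint (A 0 \ (A 1 ∪ A 2)) ((A 1 ∩ A 2) \ A 0) :=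
    Set.disjoint_left.mpr fun x hx hy => hy.2 hx.1
  -- the six equations from hypothesis (b)
  -- eq1 : (k-1)/2 = a + p2,  via between (A0∩A1) (A1\A0)
  have cov_e1 : G.between (A 0 ∩ A 1) (A 1 \ A 0) ⊆
      G.between (A 0 ∩ A 1 ∩ A 2) ((A 1 ∩ A 2) \ A 0) ∪
      G.between ((A 0 ∩ A 1) \ A 2) (A 1 \ (A 0 ∪ A 2)) := by
    rintro e ⟨u, v, he, hu, hv⟩
    by_cases hu2 : u ∈ A 2 <;> by_cases hv2 : v ∈ A 2
    · exact Or.inl (mem_between he ⟨hu, hu2⟩ ⟨⟨hv.1, hv2⟩, hv.2⟩)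
    · exact ((noedge hd02 he (Or.inl ⟨⟨hu.1, hu2⟩,
        hcompl hv.2 hv2 (fun h => hs1 (h ▸ hv.1))⟩))).elim
    · exact (noedge hc02 he (Or.inl ⟨⟨hu.1, hu2⟩, ⟨hv2, hv.2⟩⟩)).elim
    · exact Or.inr (mem_between he ⟨hu, hu2⟩ ⟨hv.1, fun h' => Or.elim h' hv.2 hv2⟩)
  have f1l : (G.between (A 0 ∩ A 1 ∩ A 2) ((A 1 ∩ A 2) \ A 0)).ncard +
      (G.between ((A 0 ∩ A 1) \ A 2) (A 1 \ (A 0 ∪ A 2))).ncard ≤ (k - 1) / 2 := by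
    rw [← hb01]
    exact sum2_le
      (between_mono (fun x hx => hx.1) (fun x hx => ⟨hx.1.1, hx.2⟩))
      (between_mono (fun x hx => hx.1) (fun x hx => ⟨hx.1, fun h => hx.2 (Or.inl h)⟩))
      (between_disjoint dXPab dPabPbc.symm)
  have f1u : (k - 1) / 2 ≤ (G.between (A 0 ∩ A 1 ∩ A 2) ((A 1 ∩ A 2) \ A 0)).ncard +
      (G.between ((A 0 ∩ A 1) \ A 2) (A 1 \ (A 0 ∪ A 2))).ncard := by
    rw [← hb01]; exact le_sum2 cov_e1
  -- eq2 : (k-1)/2 = b + p1, via between (A0∩A1) (A0\A1)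
  have cov_e2 : G.between (A 0 ∩ A 1) (A 0 \ A 1) ⊆
      G.between (A 0 ∩ A 1 ∩ A 2) ((A 0 ∩ A 2) \ A 1) ∪
      G.between ((A 0 ∩ A 1) \ A 2) (A 0 \ (A 1 ∪ A 2)) := by
    rintro e ⟨u, v, he, hu, hv⟩
    by_cases hu2 : u ∈ A 2 <;> by_cases hv2 : v ∈ A 2
    · exact Or.inl (mem_between he ⟨hu, hu2⟩ ⟨⟨hv.1, hv2⟩, hv.2⟩)
    · exact (noedge hd12 he (Or.inl ⟨⟨hu.2, hu2⟩,
        hcompl hv.2 hv2 (fun h => hs0 (h ▸ hv.1))⟩)).elim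
    · exact (noedge hc12 he (Or.inl ⟨⟨hu.2, hu2⟩, ⟨hv2, hv.2⟩⟩)).elim
    · exact Or.inr (mem_between he ⟨hu, hu2⟩ ⟨hv.1, fun h' => Or.elim h' hv.2 hv2⟩)
  have f2l : (G.between (A 0 ∩ A 1 ∩ A 2) ((A 0 ∩ A 2) \ A 1)).ncard +
      (G.between ((A 0 ∩ A 1) \ A 2) (A 0 \ (A 1 ∪ A 2))).ncard ≤ (k - 1) / 2 := by
    rw [← hb10]
    exact sum2_le
      (between_mono (fun x hx => hx.1) (fun x hx => ⟨hx.1.1, hx.2⟩))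
      (between_mono (fun x hx => hx.1) (fun x hx => ⟨hx.1, fun h => hx.2 (Or.inl h)⟩))
      (between_disjoint dXPab dPabPac.symm)
  have f2u : (k - 1) / 2 ≤ (G.between (A 0 ∩ A 1 ∩ A 2) ((A 0 ∩ A 2) \ A 1)).ncard +
      (G.between ((A 0 ∩ A 1) \ A 2) (A 0 \ (A 1 ∪ A 2))).ncard := by
    rw [← hb10]; exact le_sum2 cov_e2
  -- eq3 : (k-1)/2 = a + p4, via between (A0∩A2) (A2\A0)
  have cov_e3 : G.between (A 0 ∩ A 2) (A 2 \ A 0) ⊆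
      G.between (A 0 ∩ A 1 ∩ A 2) ((A 1 ∩ A 2) \ A 0) ∪
      G.between ((A 0 ∩ A 2) \ A 1) (A 2 \ (A 0 ∪ A 1)) := by
    rintro e ⟨u, v, he, hu, hv⟩
    by_cases hu1 : u ∈ A 1 <;> by_cases hv1 : v ∈ A 1
    · exact Or.inl (mem_between he ⟨⟨hu.1, hu1⟩, hu.2⟩ ⟨⟨hv1, hv.1⟩, hv.2⟩)
    · exact (noedge hd01 he (Or.inl ⟨⟨hu.1, hu1⟩,
        hcompl hv.2 hv1 (fun h => hs2 (h ▸ hv.1))⟩)).elim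
    · exact (noedge hc01 he (Or.inl ⟨⟨hu.1, hu1⟩, ⟨hv1, hv.2⟩⟩)).elim
    · exact Or.inr (mem_between he ⟨hu, hu1⟩ ⟨hv.1, fun h' => Or.elim h' hv.2 hv1⟩)
  have f3l : (G.between (A 0 ∩ A 1 ∩ A 2) ((A 1 ∩ A 2) \ A 0)).ncard +
      (G.between ((A 0 ∩ A 2) \ A 1) (A 2 \ (A 0 ∪ A 1))).ncard ≤ (k - 1) / 2 := by
    rw [← hb02]
    exact sum2_le
      (between_mono (fun x hx => ⟨hx.1.1, hx.2⟩) (fun x hx => ⟨hx.1.2, hx.2⟩))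
      (between_mono (fun x hx => hx.1) (fun x hx => ⟨hx.1, fun h => hx.2 (Or.inl h)⟩))
      (between_disjoint dXPac dPacPbc.symm)
  have f3u : (k - 1) / 2 ≤ (G.between (A 0 ∩ A 1 ∩ A 2) ((A 1 ∩ A 2) \ A 0)).ncard +
      (G.between ((A 0 ∩ A 2) \ A 1) (A 2 \ (A 0 ∪ A 1))).ncard := by
    rw [← hb02]; exact le_sum2 cov_e3
  -- eq4 : (k-1)/2 = c + p3, via between (A0∩A2) (A0\A2)
  have cov_e4 : G.between (A 0 ∩ A 2) (A 0 \ A 2) ⊆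
      G.between (A 0 ∩ A 1 ∩ A 2) ((A 0 ∩ A 1) \ A 2) ∪
      G.between ((A 0 ∩ A 2) \ A 1) (A 0 \ (A 1 ∪ A 2)) := by
    rintro e ⟨u, v, he, hu, hv⟩
    by_cases hu1 : u ∈ A 1 <;> by_cases hv1 : v ∈ A 1
    · exact Or.inl (mem_between he ⟨⟨hu.1, hu1⟩, hu.2⟩ ⟨⟨hv.1, hv1⟩, hv.2⟩)
    · exact (noedge hd12 he (Or.inl ⟨⟨hu1, hu.2⟩,
        hcompl hv1 hv.2 (fun h => hs0 (h ▸ hv.1))⟩)).elim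
    · exact (noedge hc21 he (Or.inl ⟨⟨hu.2, hu1⟩, ⟨hv1, hv.2⟩⟩)).elim
    · exact Or.inr (mem_between he ⟨hu, hu1⟩ ⟨hv.1, fun h' => Or.elim h' hv1 hv.2⟩)
  have f4l : (G.between (A 0 ∩ A 1 ∩ A 2) ((A 0 ∩ A 1) \ A 2)).ncard +
      (G.between ((A 0 ∩ A 2) \ A 1) (A 0 \ (A 1 ∪ A 2))).ncard ≤ (k - 1) / 2 := by
    rw [← hb20]
    exact sum2_le
      (between_mono (fun x hx => ⟨hx.1.1, hx.2⟩) (fun x hx => ⟨hx.1.1, hx.2⟩))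
      (between_mono (fun x hx => hx.1) (fun x hx => ⟨hx.1, fun h => hx.2 (Or.inr h)⟩))
      (between_disjoint dXPac dPabPac)
  have f4u : (k - 1) / 2 ≤ (G.between (A 0 ∩ A 1 ∩ A 2) ((A 0 ∩ A 1) \ A 2)).ncard +
      (G.between ((A 0 ∩ A 2) \ A 1) (A 0 \ (A 1 ∪ A 2))).ncard := by
    rw [← hb20]; exact le_sum2 cov_e4
  -- eq5 : (k-1)/2 = b + p6, via between (A1∩A2) (A2\A1)
  have cov_e5 : G.between (A 1 ∩ A 2) (A 2 \ A 1) ⊆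
      G.between (A 0 ∩ A 1 ∩ A 2) ((A 0 ∩ A 2) \ A 1) ∪
      G.between ((A 1 ∩ A 2) \ A 0) (A 2 \ (A 0 ∪ A 1)) := by
    rintro e ⟨u, v, he, hu, hv⟩
    by_cases hu0 : u ∈ A 0 <;> by_cases hv0 : v ∈ A 0
    · exact Or.inl (mem_between he ⟨⟨hu0, hu.1⟩, hu.2⟩ ⟨⟨hv0, hv.1⟩, hv.2⟩)
    · exact (noedge hd01 he (Or.inl ⟨⟨hu0, hu.1⟩,
        hcompl hv0 hv.2 (fun h => hs2 (h ▸ hv.1))⟩)).elim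
    · exact (noedge hc01 he (Or.inr ⟨⟨hv0, hv.2⟩, ⟨hu.1, hu0⟩⟩)).elim
    · exact Or.inr (mem_between he ⟨hu, hu0⟩ ⟨hv.1, fun h' => Or.elim h' hv0 hv.2⟩)
  have f5l : (G.between (A 0 ∩ A 1 ∩ A 2) ((A 0 ∩ A 2) \ A 1)).ncard +
      (G.between ((A 1 ∩ A 2) \ A 0) (A 2 \ (A 0 ∪ A 1))).ncard ≤ (k - 1) / 2 := by
    rw [← hb12]
    exact sum2_le
      (between_mono (fun x hx => ⟨hx.1.2, hx.2⟩) (fun x hx => ⟨hx.1.2, hx.2⟩))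
      (between_mono (fun x hx => hx.1) (fun x hx => ⟨hx.1, fun h => hx.2 (Or.inr h)⟩))
      (between_disjoint dXPbc dPacPbc)
  have f5u : (k - 1) / 2 ≤ (G.between (A 0 ∩ A 1 ∩ A 2) ((A 0 ∩ A 2) \ A 1)).ncard +
      (G.between ((A 1 ∩ A 2) \ A 0) (A 2 \ (A 0 ∪ A 1))).ncard := by
    rw [← hb12]; exact le_sum2 cov_e5
  -- eq6 : (k-1)/2 = c + p5, via between (A1∩A2) (A1\A2)
  have cov_e6 : G.between (A 1 ∩ A 2) (A 1 \ A 2) ⊆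
      G.between (A 0 ∩ A 1 ∩ A 2) ((A 0 ∩ A 1) \ A 2) ∪
      G.between ((A 1 ∩ A 2) \ A 0) (A 1 \ (A 0 ∪ A 2)) := by
    rintro e ⟨u, v, he, hu, hv⟩
    by_cases hu0 : u ∈ A 0 <;> by_cases hv0 : v ∈ A 0
    · exact Or.inl (mem_between he ⟨⟨hu0, hu.1⟩, hu.2⟩ ⟨⟨hv0, hv.1⟩, hv.2⟩)
    · exact (noedge hd02 he (Or.inl ⟨⟨hu0, hu.2⟩,
        hcompl hv0 hv.2 (fun h => hs1 (h ▸ hv.1))⟩)).elim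
    · exact (noedge hc02 he (Or.inr ⟨⟨hv0, hv.2⟩, ⟨hu.2, hu0⟩⟩)).elim
    · exact Or.inr (mem_between he ⟨hu, hu0⟩ ⟨hv.1, fun h' => Or.elim h' hv0 hv.2⟩)
  have f6l : (G.between (A 0 ∩ A 1 ∩ A 2) ((A 0 ∩ A 1) \ A 2)).ncard +
      (G.between ((A 1 ∩ A 2) \ A 0) (A 1 \ (A 0 ∪ A 2))).ncard ≤ (k - 1) / 2 := by
    rw [← hb21]
    exact sum2_le
      (between_mono (fun x hx => ⟨hx.1.2, hx.2⟩) (fun x hx => ⟨hx.1.2, hx.2⟩))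
      (between_mono (fun x hx => hx.1) (fun x hx => ⟨hx.1, fun h => hx.2 (Or.inr h)⟩))
      (between_disjoint dXPbc dPabPbc)
  have f6u : (k - 1) / 2 ≤ (G.between (A 0 ∩ A 1 ∩ A 2) ((A 0 ∩ A 1) \ A 2)).ncard +
      (G.between ((A 1 ∩ A 2) \ A 0) (A 1 \ (A 0 ∪ A 2))).ncard := by
    rw [← hb21]; exact le_sum2 cov_e6
  -- lower bound for the cut around X
  have cover4X : G.cutSet (A 0 ∩ A 1 ∩ A 2) ⊆
      G.between (A 0 ∩ A 1 ∩ A 2) ((A 0 ∩ A 1) \ A 2) ∪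
      G.between (A 0 ∩ A 1 ∩ A 2) ((A 0 ∩ A 2) \ A 1) ∪
      G.between (A 0 ∩ A 1 ∩ A 2) ((A 1 ∩ A 2) \ A 0) ∪
      G.between (A 0 ∩ A 1 ∩ A 2) {s} := by
    rintro e ⟨u, v, he, hu, hv⟩
    by_cases hvs : v = s
    · exact Or.inr (mem_between he hu hvs)
    by_cases hv0 : v ∈ A 0 <;> by_cases hv1 : v ∈ A 1 <;> by_cases hv2 : v ∈ A 2
    · exact absurd ⟨⟨hv0, hv1⟩, hv2⟩ hv
    · exact Or.inl (Or.inl (Or.inl (mem_between he hu ⟨⟨hv0, hv1⟩, hv2⟩)))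
    · exact Or.inl (Or.inl (Or.inr (mem_between he hu ⟨⟨hv0, hv2⟩, hv1⟩)))
    · exact (noedge hd12 he (Or.inl ⟨⟨hu.1.2, hu.2⟩, hcompl hv1 hv2 hvs⟩)).elim
    · exact Or.inl (Or.inr (mem_between he hu ⟨⟨hv1, hv2⟩, hv0⟩))
    · exact (noedge hd02 he (Or.inl ⟨⟨hu.1.1, hu.2⟩, hcompl hv0 hv2 hvs⟩)).elim
    · exact (noedge hd01 he (Or.inl ⟨⟨hu.1.1, hu.1.2⟩, hcompl hv0 hv1 hvs⟩)).elim
    · exact (noedge hd01 he (Or.inl ⟨⟨hu.1.1, hu.1.2⟩, hcompl hv0 hv1 hvs⟩)).elim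
  have lowX : k ≤ (G.between (A 0 ∩ A 1 ∩ A 2) ((A 0 ∩ A 1) \ A 2)).ncard +
      (G.between (A 0 ∩ A 1 ∩ A 2) ((A 0 ∩ A 2) \ A 1)).ncard +
      (G.between (A 0 ∩ A 1 ∩ A 2) ((A 1 ∩ A 2) \ A 0)).ncard +
      (G.between (A 0 ∩ A 1 ∩ A 2) {s}).ncard :=
    le_trans (cut_lb hcon hx0 hx0s (fun h => hw0.1 h.1.1) hw0.2) (le_sum4 cover4X)
  -- conditional lower bound for the cut around Pbc
  have cover4Pbc : G.cutSet ((A 1 ∩ A 2) \ A 0) ⊆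
      G.between (A 0 ∩ A 1 ∩ A 2) ((A 1 ∩ A 2) \ A 0) ∪
      G.between ((A 1 ∩ A 2) \ A 0) (A 1 \ (A 0 ∪ A 2)) ∪
      G.between ((A 1 ∩ A 2) \ A 0) (A 2 \ (A 0 ∪ A 1)) ∪
      G.between ((A 1 ∩ A 2) \ A 0) {s} := by
    rintro e ⟨u, v, he, hu, hv⟩
    by_cases hvs : v = s
    · exact Or.inr (mem_between he hu hvs)
    by_cases hv0 : v ∈ A 0
    · by_cases hv1 : v ∈ A 1
      · by_cases hv2 : v ∈ A 2
        · exact Or.inl (Or.inl (Or.inl (mem_between' he ⟨⟨hv0, hv1⟩, hv2⟩ hu)))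
        · exact (noedge hc02 he (Or.inr ⟨⟨hv0, hv2⟩, ⟨hu.1.2, hu.2⟩⟩)).elim
      · exact (noedge hc01 he (Or.inr ⟨⟨hv0, hv1⟩, ⟨hu.1.1, hu.2⟩⟩)).elim
    · by_cases hv1 : v ∈ A 1
      · by_cases hv2 : v ∈ A 2
        · exact absurd ⟨⟨hv1, hv2⟩, hv0⟩ hv
        · exact Or.inl (Or.inl (Or.inr
            (mem_between he hu ⟨hv1, fun h' => Or.elim h' hv0 hv2⟩)))
      · by_cases hv2 : v ∈ A 2
        · exact Or.inl (Or.inr (mem_between he hu ⟨hv2, fun h' => Or.elim h' hv0 hv1⟩))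
        · exact (noedge hd12 he (Or.inl ⟨hu.1, hcompl hv1 hv2 hvs⟩)).elim
  have brPbc : ((G.between (A 0 ∩ A 1 ∩ A 2) ((A 1 ∩ A 2) \ A 0)).ncard = 0 ∧
      (G.between ((A 1 ∩ A 2) \ A 0) (A 1 \ (A 0 ∪ A 2))).ncard = 0 ∧
      (G.between ((A 1 ∩ A 2) \ A 0) (A 2 \ (A 0 ∪ A 1))).ncard = 0 ∧
      (G.between ((A 1 ∩ A 2) \ A 0) {s}).ncard = 0) ∨
      k ≤ (G.between (A 0 ∩ A 1 ∩ A 2) ((A 1 ∩ A 2) \ A 0)).ncard +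
      (G.between ((A 1 ∩ A 2) \ A 0) (A 1 \ (A 0 ∪ A 2))).ncard +
      (G.between ((A 1 ∩ A 2) \ A 0) (A 2 \ (A 0 ∪ A 1))).ncard +
      (G.between ((A 1 ∩ A 2) \ A 0) {s}).ncard := by
    by_cases hE : (A 1 ∩ A 2) \ A 0 = ∅
    · left
      refine ⟨?_, ?_, ?_, ?_⟩
      · rw [hE, between_empty_right, Set.ncard_empty]
      · rw [hE, between_empty_left, Set.ncard_empty]
      · rw [hE, between_empty_left, Set.ncard_empty]
      · rw [hE, between_empty_left, Set.ncard_empty]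
    · right
      obtain ⟨u1, hu1⟩ := Set.nonempty_iff_ne_empty.mpr hE
      exact le_trans (cut_lb hcon hu1 (fun h => hs1 (h ▸ hu1.1.1))
        (fun h => hw1.1 h.1.1) hw1.2) (le_sum4 cover4Pbc)
  -- conditional lower bound for the cut around Pac
  have cover4Pac : G.cutSet ((A 0 ∩ A 2) \ A 1) ⊆
      G.between (A 0 ∩ A 1 ∩ A 2) ((A 0 ∩ A 2) \ A 1) ∪
      G.between ((A 0 ∩ A 2) \ A 1) (A 0 \ (A 1 ∪ A 2)) ∪
      G.between ((A 0 ∩ A 2) \ A 1) (A 2 \ (A 0 ∪ A 1)) ∪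
      G.between ((A 0 ∩ A 2) \ A 1) {s} := by
    rintro e ⟨u, v, he, hu, hv⟩
    by_cases hvs : v = s
    · exact Or.inr (mem_between he hu hvs)
    by_cases hv1 : v ∈ A 1
    · by_cases hv0 : v ∈ A 0
      · by_cases hv2 : v ∈ A 2
        · exact Or.inl (Or.inl (Or.inl (mem_between' he ⟨⟨hv0, hv1⟩, hv2⟩ hu)))
        · exact (noedge hc21 he (Or.inl ⟨⟨hu.1.2, hu.2⟩, ⟨hv1, hv2⟩⟩)).elim
      · exact (noedge hc01 he (Or.inl ⟨⟨hu.1.1, hu.2⟩, ⟨hv1, hv0⟩⟩)).elim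
    · by_cases hv0 : v ∈ A 0
      · by_cases hv2 : v ∈ A 2
        · exact absurd ⟨⟨hv0, hv2⟩, hv1⟩ hv
        · exact Or.inl (Or.inl (Or.inr
            (mem_between he hu ⟨hv0, fun h' => Or.elim h' hv1 hv2⟩)))
      · by_cases hv2 : v ∈ A 2
        · exact Or.inl (Or.inr (mem_between he hu ⟨hv2, fun h' => Or.elim h' hv0 hv1⟩))
        · exact (noedge hd02 he (Or.inl ⟨hu.1, hcompl hv0 hv2 hvs⟩)).elim
  have brPac : ((G.between (A 0 ∩ A 1 ∩ A 2) ((A 0 ∩ A 2) \ A 1)).ncard = 0 ∧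
      (G.between ((A 0 ∩ A 2) \ A 1) (A 0 \ (A 1 ∪ A 2))).ncard = 0 ∧
      (G.between ((A 0 ∩ A 2) \ A 1) (A 2 \ (A 0 ∪ A 1))).ncard = 0 ∧
      (G.between ((A 0 ∩ A 2) \ A 1) {s}).ncard = 0) ∨
      k ≤ (G.between (A 0 ∩ A 1 ∩ A 2) ((A 0 ∩ A 2) \ A 1)).ncard +
      (G.between ((A 0 ∩ A 2) \ A 1) (A 0 \ (A 1 ∪ A 2))).ncard +
      (G.between ((A 0 ∩ A 2) \ A 1) (A 2 \ (A 0 ∪ A 1))).ncard +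
      (G.between ((A 0 ∩ A 2) \ A 1) {s}).ncard := by
    by_cases hE : (A 0 ∩ A 2) \ A 1 = ∅
    · left
      refine ⟨?_, ?_, ?_, ?_⟩
      · rw [hE, between_empty_right, Set.ncard_empty]
      · rw [hE, between_empty_left, Set.ncard_empty]
      · rw [hE, between_empty_left, Set.ncard_empty]
      · rw [hE, between_empty_left, Set.ncard_empty]
    · right
      obtain ⟨u1, hu1⟩ := Set.nonempty_iff_ne_empty.mpr hE
      exact le_trans (cut_lb hcon hu1 (fun h => hs0 (h ▸ hu1.1.1))
        (fun h => hw0.1 h.1.1) hw0.2) (le_sum4 cover4Pac)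
  -- conditional lower bound for the cut around Pab
  have cover4Pab : G.cutSet ((A 0 ∩ A 1) \ A 2) ⊆
      G.between (A 0 ∩ A 1 ∩ A 2) ((A 0 ∩ A 1) \ A 2) ∪
      G.between ((A 0 ∩ A 1) \ A 2) (A 0 \ (A 1 ∪ A 2)) ∪
      G.between ((A 0 ∩ A 1) \ A 2) (A 1 \ (A 0 ∪ A 2)) ∪
      G.between ((A 0 ∩ A 1) \ A 2) {s} := by
    rintro e ⟨u, v, he, hu, hv⟩
    by_cases hvs : v = s
    · exact Or.inr (mem_between he hu hvs)
    by_cases hv2 : v ∈ A 2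
    · by_cases hv0 : v ∈ A 0
      · by_cases hv1 : v ∈ A 1
        · exact Or.inl (Or.inl (Or.inl (mem_between' he ⟨⟨hv0, hv1⟩, hv2⟩ hu)))
        · exact (noedge hc12 he (Or.inl ⟨⟨hu.1.2, hu.2⟩, ⟨hv2, hv1⟩⟩)).elim
      · exact (noedge hc02 he (Or.inl ⟨⟨hu.1.1, hu.2⟩, ⟨hv2, hv0⟩⟩)).elim
    · by_cases hv0 : v ∈ A 0
      · by_cases hv1 : v ∈ A 1
        · exact absurd ⟨⟨hv0, hv1⟩, hv2⟩ hv
        · exact Or.inl (Or.inl (Or.inr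
            (mem_between he hu ⟨hv0, fun h' => Or.elim h' hv1 hv2⟩)))
      · by_cases hv1 : v ∈ A 1
        · exact Or.inl (Or.inr (mem_between he hu ⟨hv1, fun h' => Or.elim h' hv0 hv2⟩))
        · exact (noedge hd01 he (Or.inl ⟨hu.1, hcompl hv0 hv1 hvs⟩)).elim
  have brPab : ((G.between (A 0 ∩ A 1 ∩ A 2) ((A 0 ∩ A 1) \ A 2)).ncard = 0 ∧
      (G.between ((A 0 ∩ A 1) \ A 2) (A 0 \ (A 1 ∪ A 2))).ncard = 0 ∧
      (G.between ((A 0 ∩ A 1) \ A 2) (A 1 \ (A 0 ∪ A 2))).ncard = 0 ∧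
      (G.between ((A 0 ∩ A 1) \ A 2) {s}).ncard = 0) ∨
      k ≤ (G.between (A 0 ∩ A 1 ∩ A 2) ((A 0 ∩ A 1) \ A 2)).ncard +
      (G.between ((A 0 ∩ A 1) \ A 2) (A 0 \ (A 1 ∪ A 2))).ncard +
      (G.between ((A 0 ∩ A 1) \ A 2) (A 1 \ (A 0 ∪ A 2))).ncard +
      (G.between ((A 0 ∩ A 1) \ A 2) {s}).ncard := by
    by_cases hE : (A 0 ∩ A 1) \ A 2 = ∅
    · left
      refine ⟨?_, ?_, ?_, ?_⟩
      · rw [hE, between_empty_right, Set.ncard_empty]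
      · rw [hE, between_empty_left, Set.ncard_empty]
      · rw [hE, between_empty_left, Set.ncard_empty]
      · rw [hE, between_empty_left, Set.ncard_empty]
    · right
      obtain ⟨u1, hu1⟩ := Set.nonempty_iff_ne_empty.mpr hE
      exact le_trans (cut_lb hcon hu1 (fun h => hs0 (h ▸ hu1.1.1))
        (fun h => hw0.1 h.1.1) hw0.2) (le_sum4 cover4Pab)
  -- upper bounds from the dangerous sets
  have spA1 := between_split (G := G) (P := A 0 ∩ A 1 ∩ A 2)
    (Q₁ := (A 1 ∩ A 2) \ A 0) (Q₂ := {s}) dsPbc dsX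
  have spA2 := between_split (G := G) (P := (A 0 ∩ A 1) \ A 2)
    (Q₁ := A 1 \ (A 0 ∪ A 2)) (Q₂ := {s}) dsQb dsPab
  have spA3 := between_split (G := G) (P := (A 0 ∩ A 2) \ A 1)
    (Q₁ := A 2 \ (A 0 ∪ A 1)) (Q₂ := {s}) dsQc dsPac
  have spB1 := between_split (G := G) (P := A 0 ∩ A 1 ∩ A 2)
    (Q₁ := (A 0 ∩ A 2) \ A 1) (Q₂ := {s}) dsPac dsX
  have spB2 := between_split (G := G) (P := (A 0 ∩ A 1) \ A 2)
    (Q₁ := A 0 \ (A 1 ∪ A 2)) (Q₂ := {s}) dsQa dsPab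
  have spB3 := between_split (G := G) (P := (A 1 ∩ A 2) \ A 0)
    (Q₁ := A 2 \ (A 0 ∪ A 1)) (Q₂ := {s}) dsQc dsPbc
  have spC1 := between_split (G := G) (P := A 0 ∩ A 1 ∩ A 2)
    (Q₁ := (A 0 ∩ A 1) \ A 2) (Q₂ := {s}) dsPab dsX
  have spC2 := between_split (G := G) (P := (A 0 ∩ A 2) \ A 1)
    (Q₁ := A 0 \ (A 1 ∪ A 2)) (Q₂ := {s}) dsQa dsPac
  have spC3 := between_split (G := G) (P := (A 1 ∩ A 2) \ A 0)
    (Q₁ := A 1 \ (A 0 ∪ A 2)) (Q₂ := {s}) dsQb dsPbc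
  have hA1 : G.between (A 0 ∩ A 1 ∩ A 2) (((A 1 ∩ A 2) \ A 0) ∪ {s}) ⊆ G.cutSet (A 0) := by
    rintro e ⟨u, v, he, hu, hv⟩
    exact ⟨u, v, he, hu.1.1, Or.elim hv (fun h => h.2) (fun h hvA => hs0 (h ▸ hvA))⟩
  have hA2 : G.between ((A 0 ∩ A 1) \ A 2) ((A 1 \ (A 0 ∪ A 2)) ∪ {s}) ⊆ G.cutSet (A 0) := by
    rintro e ⟨u, v, he, hu, hv⟩
    exact ⟨u, v, he, hu.1.1,
      Or.elim hv (fun h hvA => h.2 (Or.inl hvA)) (fun h hvA => hs0 (h ▸ hvA))⟩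
  have hA3 : G.between ((A 0 ∩ A 2) \ A 1) ((A 2 \ (A 0 ∪ A 1)) ∪ {s}) ⊆ G.cutSet (A 0) := by
    rintro e ⟨u, v, he, hu, hv⟩
    exact ⟨u, v, he, hu.1.1,
      Or.elim hv (fun h hvA => h.2 (Or.inl hvA)) (fun h hvA => hs0 (h ▸ hvA))⟩
  have hB1 : G.between (A 0 ∩ A 1 ∩ A 2) (((A 0 ∩ A 2) \ A 1) ∪ {s}) ⊆ G.cutSet (A 1) := by
    rintro e ⟨u, v, he, hu, hv⟩
    exact ⟨u, v, he, hu.1.2, Or.elim hv (fun h => h.2) (fun h hvA => hs1 (h ▸ hvA))⟩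
  have hB2 : G.between ((A 0 ∩ A 1) \ A 2) ((A 0 \ (A 1 ∪ A 2)) ∪ {s}) ⊆ G.cutSet (A 1) := by
    rintro e ⟨u, v, he, hu, hv⟩
    exact ⟨u, v, he, hu.1.2,
      Or.elim hv (fun h hvA => h.2 (Or.inl hvA)) (fun h hvA => hs1 (h ▸ hvA))⟩
  have hB3 : G.between ((A 1 ∩ A 2) \ A 0) ((A 2 \ (A 0 ∪ A 1)) ∪ {s}) ⊆ G.cutSet (A 1) := by
    rintro e ⟨u, v, he, hu, hv⟩
    exact ⟨u, v, he, hu.1.1,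
      Or.elim hv (fun h hvA => h.2 (Or.inr hvA)) (fun h hvA => hs1 (h ▸ hvA))⟩
  have hC1 : G.between (A 0 ∩ A 1 ∩ A 2) (((A 0 ∩ A 1) \ A 2) ∪ {s}) ⊆ G.cutSet (A 2) := by
    rintro e ⟨u, v, he, hu, hv⟩
    exact ⟨u, v, he, hu.2, Or.elim hv (fun h => h.2) (fun h hvA => hs2 (h ▸ hvA))⟩
  have hC2 : G.between ((A 0 ∩ A 2) \ A 1) ((A 0 \ (A 1 ∪ A 2)) ∪ {s}) ⊆ G.cutSet (A 2) := by
    rintro e ⟨u, v, he, hu, hv⟩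
    exact ⟨u, v, he, hu.1.2,
      Or.elim hv (fun h hvA => h.2 (Or.inr hvA)) (fun h hvA => hs2 (h ▸ hvA))⟩
  have hC3 : G.between ((A 1 ∩ A 2) \ A 0) ((A 1 \ (A 0 ∪ A 2)) ∪ {s}) ⊆ G.cutSet (A 2) := by
    rintro e ⟨u, v, he, hu, hv⟩
    exact ⟨u, v, he, hu.1.2,
      Or.elim hv (fun h hvA => h.2 (Or.inr hvA)) (fun h hvA => hs2 (h ▸ hvA))⟩
  have upA : (G.between (A 0 ∩ A 1 ∩ A 2) ((A 1 ∩ A 2) \ A 0)).ncard +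
      (G.between (A 0 ∩ A 1 ∩ A 2) {s}).ncard +
      ((G.between ((A 0 ∩ A 1) \ A 2) (A 1 \ (A 0 ∪ A 2))).ncard +
       (G.between ((A 0 ∩ A 1) \ A 2) {s}).ncard) +
      ((G.between ((A 0 ∩ A 2) \ A 1) (A 2 \ (A 0 ∪ A 1))).ncard +
       (G.between ((A 0 ∩ A 2) \ A 1) {s}).ncard) ≤ k + 1 := by
    have t := sum3_le hA1 hA2 hA3
      (between_disjoint dXPab (Set.disjoint_union_left.mpr
        ⟨dPabPbc.symm, Set.disjoint_singleton_left.mpr sPab⟩))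
      (between_disjoint dXPac (Set.disjoint_union_left.mpr
        ⟨dPacPbc.symm, Set.disjoint_singleton_left.mpr sPac⟩))
      (between_disjoint dPabPac (Set.disjoint_union_left.mpr
        ⟨dQbPac, Set.disjoint_singleton_left.mpr sPac⟩))
    rw [spA1, spA2, spA3] at t
    exact le_trans t hcut0
  have upB : (G.between (A 0 ∩ A 1 ∩ A 2) ((A 0 ∩ A 2) \ A 1)).ncard +
      (G.between (A 0 ∩ A 1 ∩ A 2) {s}).ncard +
      ((G.between ((A 0 ∩ A 1) \ A 2) (A 0 \ (A 1 ∪ A 2))).ncard +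
       (G.between ((A 0 ∩ A 1) \ A 2) {s}).ncard) +
      ((G.between ((A 1 ∩ A 2) \ A 0) (A 2 \ (A 0 ∪ A 1))).ncard +
       (G.between ((A 1 ∩ A 2) \ A 0) {s}).ncard) ≤ k + 1 := by
    have t := sum3_le hB1 hB2 hB3
      (between_disjoint dXPab (Set.disjoint_union_left.mpr
        ⟨dPabPac.symm, Set.disjoint_singleton_left.mpr sPab⟩))
      (between_disjoint dXPbc (Set.disjoint_union_left.mpr
        ⟨dPacPbc, Set.disjoint_singleton_left.mpr sPbc⟩))
      (between_disjoint dPabPbc (Set.disjoint_union_left.mpr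
        ⟨dQaPbc, Set.disjoint_singleton_left.mpr sPbc⟩))
    rw [spB1, spB2, spB3] at t
    exact le_trans t hcut1
  have upC : (G.between (A 0 ∩ A 1 ∩ A 2) ((A 0 ∩ A 1) \ A 2)).ncard +
      (G.between (A 0 ∩ A 1 ∩ A 2) {s}).ncard +
      ((G.between ((A 0 ∩ A 2) \ A 1) (A 0 \ (A 1 ∪ A 2))).ncard +
       (G.between ((A 0 ∩ A 2) \ A 1) {s}).ncard) +
      ((G.between ((A 1 ∩ A 2) \ A 0) (A 1 \ (A 0 ∪ A 2))).ncard +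
       (G.between ((A 1 ∩ A 2) \ A 0) {s}).ncard) ≤ k + 1 := by
    have t := sum3_le hC1 hC2 hC3
      (between_disjoint dXPac (Set.disjoint_union_left.mpr
        ⟨dPabPac, Set.disjoint_singleton_left.mpr sPac⟩))
      (between_disjoint dXPbc (Set.disjoint_union_left.mpr
        ⟨dPabPbc, Set.disjoint_singleton_left.mpr sPbc⟩))
      (between_disjoint dPacPbc (Set.disjoint_union_left.mpr
        ⟨dQaPbc, Set.disjoint_singleton_left.mpr sPbc⟩))
    rw [spC1, spC2, spC3] at t
    exact le_trans t hcut2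
  exact statement8_arith k m _ _ _ _ _ _ _ _ _ _ _ _ _ hk hm f1l f1u f2l f2u f3l f3u f4l f4u f5l f5u f6l f6u lowX brPbc brPac brPab upA upB upC
end
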